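/- arXiv:2512.23357 — 9 statements merged into one kernel-verified Lean document; each statement's English description precedes it below -/
import Mathlib

section
/- Let f be analytic on an open neighborhood of the closed unit disk, let ν and n be integers with 0 ≤ ν ≤ n, and let r ∈ R_ν be such that the error function e = r − f has no zeros on the unit circle S and the winding number ω of the error curve e(S) about 0 satisfies ω ≥ ν + n + 1. Then min_{z∈S} |e(z)| ≤ E_∞ ≤ max_{z∈S} |e(z)|, where E_∞ = inf_{r̃ ∈ R_n} ‖f − r̃‖_∞. -/
open Complex Metric Polynomial

/-- `R_n`: rational functions of degree at most `n` analytic in the closed unit disk,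
viewed as functions agreeing with `p/q` on the closed unit disk. -/
def IsRatDeg (n : ℕ) (r : ℂ → ℂ) : Prop :=
  ∃ p q : Polynomial ℂ, p.natDegree ≤ n ∧ q.natDegree ≤ n ∧
    (∀ z : ℂ, ‖z‖ ≤ 1 → q.eval z ≠ 0) ∧
    (∀ z : ℂ, ‖z‖ ≤ 1 → r z = p.eval z / q.eval z)

/-- the sup norm over the unit circle -/
noncomputable def LInfNorm (g : ℂ → ℂ) : ℝ :=
  sSup {y : ℝ | ∃ z : ℂ, ‖z‖ = 1 ∧ y = ‖g z‖}


private lemma aux_prod_diff (s : Multiset ℂ) :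
    Differentiable ℂ (fun z : ℂ => (s.map (fun a => z - a)).prod) := by
  induction s using Multiset.induction_on with
  | empty => simpa using differentiable_const (1 : ℂ)
  | cons a s ih =>
      simp only [Multiset.map_cons, Multiset.prod_cons]
      exact (differentiable_id.sub_const a).mul ih

private lemma aux_logDeriv_congr {f g : ℂ → ℂ} {z : ℂ} (h : f =ᶠ[nhds z] g) :
    logDeriv f z = logDeriv g z := by
  rw [logDeriv_apply, logDeriv_apply, h.deriv_eq, h.self_of_nhds]

private lemma aux_logDeriv_prod (s : Multiset ℂ) (z : ℂ) (hz : ∀ a ∈ s, z ≠ a) :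
    logDeriv (fun w : ℂ => (s.map (fun a => w - a)).prod) z
      = (s.map (fun a => (z - a)⁻¹)).sum := by
  induction s using Multiset.induction_on with
  | empty => simpa using logDeriv_const (1 : ℂ) ▸ congrFun (logDeriv_const (1:ℂ)) z
  | cons a s ih =>
      have hne : ∀ b ∈ s, z ≠ b := fun b hb => hz b (Multiset.mem_cons_of_mem hb)
      have hprod : (s.map (fun a => z - a)).prod ≠ 0 := by
        rw [Ne, Multiset.prod_eq_zero_iff]
        intro h
        obtain ⟨b, hb, hb0⟩ := Multiset.mem_map.mp h
        exact hne b hb (sub_eq_zero.mp hb0)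
      simp only [Multiset.map_cons, Multiset.prod_cons, Multiset.sum_cons]
      rw [logDeriv_mul (f := fun w : ℂ => w - a)
        (g := fun w : ℂ => (Multiset.map (fun a => w - a) s).prod) z
        (sub_ne_zero.mpr (hz a (Multiset.mem_cons_self a s))) hprod
        (differentiableAt_id.sub_const a) ((aux_prod_diff s) z), ih hne]
      congr 1
      rw [logDeriv_apply, deriv_sub_const, deriv_id'', one_div]

private lemma aux_sum_contOn (s : Multiset ℂ) (hs : ∀ a ∈ s, ‖a‖ ≠ 1) :
    ContinuousOn (fun z : ℂ => (s.map (fun a => (z - a)⁻¹)).sum) (sphere (0:ℂ) 1) := by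
  induction s using Multiset.induction_on with
  | empty => simpa using continuousOn_const
  | cons a s ih =>
      simp only [Multiset.map_cons, Multiset.sum_cons]
      refine ContinuousOn.add ?_ (ih fun b hb => hs b (Multiset.mem_cons_of_mem hb))
      refine ((continuous_id.sub continuous_const).continuousOn).inv₀ fun z hz => sub_ne_zero.mpr ?_
      intro h
      simp only [id_eq] at h
      apply hs a (Multiset.mem_cons_self a s)
      rw [← h]
      rwa [mem_sphere_zero_iff_norm] at hz

private lemma aux_single_integral_out {a : ℂ} (ha : 1 < ‖a‖) :
    (∮ z in C((0:ℂ), 1), (z - a)⁻¹) = 0 := by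
  apply circleIntegral_eq_zero_of_differentiable_on_off_countable zero_le_one Set.countable_empty
  · refine ((continuous_id'.sub continuous_const).continuousOn).inv₀ fun z hz => sub_ne_zero.mpr ?_
    intro h
    simp only [id_eq] at h
    rw [mem_closedBall_zero_iff] at hz
    rw [h] at hz; linarith
  · intro z hz
    refine (differentiableAt_id.sub_const a).inv (sub_ne_zero.mpr ?_)
    rw [Set.diff_empty, mem_ball_zero_iff] at hz
    intro h; simp only [id_eq] at h; rw [h] at hz; linarith

private lemma aux_sum_contOn' (s : Multiset ℂ) (hs : ∀ a ∈ s, ‖a‖ ≠ 1) :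
    ContinuousOn (fun z : ℂ => (s.map (fun a => (z - a)⁻¹)).sum) (sphere (0:ℂ) 1) := by
  induction s using Multiset.induction_on with
  | empty => exact continuousOn_const
  | cons a s ih =>
      simp only [Multiset.map_cons, Multiset.sum_cons]
      refine ContinuousOn.add ?_ (ih fun b hb => hs b (Multiset.mem_cons_of_mem hb))
      refine ((continuous_id'.sub continuous_const).continuousOn).inv₀ fun z hz => sub_ne_zero.mpr ?_
      intro h
      simp only [id_eq] at h
      apply hs a (Multiset.mem_cons_self a s)
      rw [← h]
      rwa [mem_sphere_zero_iff_norm] at hz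

private lemma aux_circleIntegral_add {f g : ℂ → ℂ} (hf : CircleIntegrable f 0 1)
    (hg : CircleIntegrable g 0 1) :
    (∮ z in C((0:ℂ), 1), (f z + g z)) = (∮ z in C((0:ℂ), 1), f z) + ∮ z in C((0:ℂ), 1), g z := by
  simp only [circleIntegral, smul_add, intervalIntegral.integral_add hf.out hg.out]

private lemma aux_sum_integral (s : Multiset ℂ) (hs : ∀ a ∈ s, ‖a‖ ≠ 1) :
    (∮ z in C((0:ℂ), 1), (s.map (fun a => (z - a)⁻¹)).sum)
      = 2 * Real.pi * Complex.I
          * ((s.filter (fun a => ‖a‖ < 1)).card : ℂ) := by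
  induction s using Multiset.induction_on with
  | empty => simp [circleIntegral]
  | cons a s ih =>
      have ha := hs a (Multiset.mem_cons_self a s)
      have hs' : ∀ b ∈ s, ‖b‖ ≠ 1 := fun b hb => hs b (Multiset.mem_cons_of_mem hb)
      have hint1 : CircleIntegrable (fun z : ℂ => (z - a)⁻¹) 0 1 := by
        rw [circleIntegrable_sub_inv_iff]
        right
        simpa [mem_sphere_zero_iff_norm] using ha
      have hint2 : CircleIntegrable (fun z : ℂ => (s.map (fun a => (z - a)⁻¹)).sum) 0 1 :=
        (aux_sum_contOn' s hs').circleIntegrable zero_le_one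
      have hstep : (∮ z in C((0:ℂ), 1), ((z - a)⁻¹ + (s.map (fun a => (z - a)⁻¹)).sum))
          = (∮ z in C((0:ℂ), 1), (z - a)⁻¹)
            + ∮ z in C((0:ℂ), 1), (s.map (fun a => (z - a)⁻¹)).sum :=
        aux_circleIntegral_add hint1 hint2
      simp only [Multiset.map_cons, Multiset.sum_cons]
      rw [hstep, ih hs']
      rcases lt_or_gt_of_ne ha with h | h
      · rw [circleIntegral.integral_sub_inv_of_mem_ball
          (by rwa [mem_ball_zero_iff])]
        rw [Multiset.filter_cons_of_pos (p := fun a => ‖a‖ < 1) _ h]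
        push_cast [Multiset.card_cons]
        ring
      · rw [aux_single_integral_out h, Multiset.filter_cons_of_neg (p := fun a => ‖a‖ < 1) _ (not_lt.mpr h.le)]
        ring

private lemma aux_logDeriv_contOn (u : ℂ → ℂ) (V : Set ℂ) (hV : IsOpen V)
    (hsub : sphere (0:ℂ) 1 ⊆ V) (hu : DifferentiableOn ℂ u V)
    (hne : ∀ z ∈ sphere (0:ℂ) 1, u z ≠ 0) :
    ContinuousOn (logDeriv u) (sphere (0:ℂ) 1) := by
  have h1 : ContinuousOn (fun z => deriv u z / u z) (sphere (0:ℂ) 1) :=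
    (((hu.analyticOnNhd hV).deriv.continuousOn).mono hsub).div
      ((hu.continuousOn).mono hsub) hne
  exact h1.congr fun z _ => logDeriv_apply u z

private lemma aux_logDeriv_integral_zero (u : ℂ → ℂ) (V : Set ℂ) (hV : IsOpen V)
    (hsub : sphere (0:ℂ) 1 ⊆ V) (hu : DifferentiableOn ℂ u V)
    (hre : ∀ z ∈ sphere (0:ℂ) 1, 0 < (u z).re) :
    (∮ z in C((0:ℂ), 1), logDeriv u z) = 0 := by
  have hne : ∀ z ∈ sphere (0:ℂ) 1, u z ≠ 0 := by
    intro z hz h0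
    have := hre z hz
    rw [h0] at this
    simp at this
  set F : ℝ → ℂ := fun θ => Complex.log (u (circleMap 0 1 θ)) with hF
  set F' : ℝ → ℂ := fun θ => (circleMap 0 1 θ * Complex.I) * logDeriv u (circleMap 0 1 θ) with hF'
  have hmem : ∀ θ : ℝ, circleMap 0 1 θ ∈ sphere (0:ℂ) 1 := fun θ =>
    circleMap_mem_sphere 0 zero_le_one θ
  have hder : ∀ θ : ℝ, HasDerivAt F (F' θ) θ := by
    intro θ
    set z := circleMap 0 1 θ with hzdef
    have hd : HasDerivAt u (deriv u z) z :=
      (hu.differentiableAt (hV.mem_nhds (hsub (hmem θ)))).hasDerivAt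
    have hγ : HasDerivAt (circleMap 0 1) (circleMap 0 1 θ * Complex.I) θ :=
      hasDerivAt_circleMap 0 1 θ
    have hlog : HasDerivAt Complex.log (u z)⁻¹ (u z) :=
      Complex.hasDerivAt_log (Complex.mem_slitPlane_iff.mpr (Or.inl (hre z (hmem θ))))
    have h1 : HasDerivAt (fun θ : ℝ => u (circleMap 0 1 θ)) (deriv u z * (z * Complex.I)) θ :=
      hd.comp θ hγ
    have h2 : HasDerivAt (fun θ : ℝ => Complex.log (u (circleMap 0 1 θ)))
        ((u z)⁻¹ * (deriv u z * (z * Complex.I))) θ :=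
        HasDerivAt.comp (h₂ := Complex.log) (h := fun θ : ℝ => u (circleMap 0 1 θ)) θ hlog h1
    have hval : (u z)⁻¹ * (deriv u z * (z * Complex.I)) = F' θ := by
      show _ = circleMap 0 1 θ * Complex.I * logDeriv u (circleMap 0 1 θ)
      rw [logDeriv_apply, div_eq_mul_inv, ← hzdef]
      ring
    exact hval ▸ h2
  have hcont : Continuous F' := by
    refine ((continuous_circleMap 0 1).mul continuous_const).mul ?_
    exact (aux_logDeriv_contOn u V hV hsub hu hne).comp_continuous (continuous_circleMap 0 1) hmem
  have hrw : (∮ z in C((0:ℂ), 1), logDeriv u z) = ∫ θ in (0:ℝ)..(2*Real.pi), F' θ := by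
    simp only [circleIntegral, deriv_circleMap, smul_eq_mul, hF']
  rw [hrw, intervalIntegral.integral_eq_sub_of_hasDerivAt (fun t _ => hder t)
    (hcont.intervalIntegrable _ _)]
  have hper : circleMap 0 1 (2*Real.pi) = circleMap 0 1 0 := by
    simpa using periodic_circleMap 0 1 0
  simp [hF, hper]
/-- Nearly circular ⇒ near-best for L^∞ approximation (de la Vallée Poussin-type lemma). -/
theorem stmt0 (f : ℂ → ℂ)
    (hf : ∃ U : Set ℂ, IsOpen U ∧ closedBall (0:ℂ) 1 ⊆ U ∧ DifferentiableOn ℂ f U)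
    (ν n : ℕ) (hνn : ν ≤ n)
    (p q : Polynomial ℂ) (hp : p.natDegree ≤ ν) (hq : q.natDegree ≤ ν)
    (hq0 : ∀ z : ℂ, ‖z‖ ≤ 1 → q.eval z ≠ 0)
    (e : ℂ → ℂ) (he : ∀ z : ℂ, e z = p.eval z / q.eval z - f z)
    (he0 : ∀ z : ℂ, ‖z‖ = 1 → e z ≠ 0)
    (ω : ℤ) (hω : (ν : ℤ) + (n : ℤ) + 1 ≤ ω)
    (hwind : (2 * (Real.pi : ℂ) * Complex.I)⁻¹ *
      (∮ z in C((0:ℂ), 1), deriv e z / e z) = (ω : ℂ)) :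
    sInf {y : ℝ | ∃ z : ℂ, ‖z‖ = 1 ∧ y = ‖e z‖} ≤
      sInf {y : ℝ | ∃ r : ℂ → ℂ, IsRatDeg n r ∧ y = LInfNorm (fun z => f z - r z)} ∧
    sInf {y : ℝ | ∃ r : ℂ → ℂ, IsRatDeg n r ∧ y = LInfNorm (fun z => f z - r z)} ≤
      sSup {y : ℝ | ∃ z : ℂ, ‖z‖ = 1 ∧ y = ‖e z‖} := by
  obtain ⟨U, hUo, hUsub, hUd⟩ := hf
  have hsph : ∀ z : ℂ, z ∈ sphere (0:ℂ) 1 → ‖z‖ = 1 := fun z hz => by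
    rwa [mem_sphere_zero_iff_norm] at hz
  have hsph' : ∀ z : ℂ, ‖z‖ = 1 → z ∈ sphere (0:ℂ) 1 := fun z hz => by
    rwa [mem_sphere_zero_iff_norm]
  have hEbd : BddBelow {y : ℝ | ∃ z : ℂ, ‖z‖ = 1 ∧ y = ‖e z‖} :=
    ⟨0, by rintro y ⟨z, hz, rfl⟩; exact norm_nonneg _⟩
  have hAlb : ∀ y ∈ {y : ℝ | ∃ r : ℂ → ℂ, IsRatDeg n r ∧ y = LInfNorm (fun z => f z - r z)},
      (0:ℝ) ≤ y := by
    rintro y ⟨r, _, rfl⟩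
    exact Real.sSup_nonneg (by rintro x ⟨z, hz, rfl⟩; exact norm_nonneg _)
  have hr0mem : LInfNorm (fun z => f z - p.eval z / q.eval z)
      ∈ {y : ℝ | ∃ r : ℂ → ℂ, IsRatDeg n r ∧ y = LInfNorm (fun z => f z - r z)} :=
    ⟨fun z => p.eval z / q.eval z,
      ⟨p, q, hp.trans hνn, hq.trans hνn, hq0, fun z _ => rfl⟩, rfl⟩
  have habs_e : ∀ z : ℂ, ‖f z - p.eval z / q.eval z‖ = ‖e z‖ := by
    intro z
    rw [he z, norm_sub_rev]
  have hsetEq : {y : ℝ | ∃ z : ℂ, ‖z‖ = 1 ∧ y = ‖f z - p.eval z / q.eval z‖}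
      = {y : ℝ | ∃ z : ℂ, ‖z‖ = 1 ∧ y = ‖e z‖} := by
    ext y
    constructor
    · rintro ⟨z, hz, rfl⟩; exact ⟨z, hz, (habs_e z)⟩
    · rintro ⟨z, hz, rfl⟩; exact ⟨z, hz, (habs_e z).symm⟩
  constructor
  · -- lower bound : sInf E ≤ E∞
    apply le_csInf ⟨_, hr0mem⟩
    rintro y ⟨rt, ⟨pt, qt, hpt, hqt, hqt0, hrt⟩, rfl⟩
    by_contra hcon
    push_neg at hcon
    -- hcon : LInfNorm (fun z => f z - rt z) < sInf E
    have hyb : ∀ z : ℂ, ‖z‖ = 1 →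
        ‖f z - rt z‖ ≤ LInfNorm (fun w => f w - rt w) := by
      intro z hz
      rw [LInfNorm]
      refine le_csSup ?_ ⟨z, hz, rfl⟩
      have hEq : {y : ℝ | ∃ z : ℂ, ‖z‖ = 1 ∧ y = ‖f z - rt z‖}
          = (fun z => ‖f z - rt z‖) '' sphere (0:ℂ) 1 := by
        ext x
        constructor
        · rintro ⟨w, hw, rfl⟩; exact ⟨w, hsph' w hw, rfl⟩
        · rintro ⟨w, hw, rfl⟩; exact ⟨w, hsph w hw, rfl⟩
      rw [hEq]
      apply IsCompact.bddAbove_image (isCompact_sphere 0 1)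
      have hsubU : sphere (0:ℂ) 1 ⊆ U := fun w hw => hUsub
        (by rw [mem_closedBall_zero_iff, hsph w hw])
      have hfc : ContinuousOn f (sphere (0:ℂ) 1) := (hUd.continuousOn).mono hsubU
      have hrtc : ContinuousOn rt (sphere (0:ℂ) 1) := by
        apply ContinuousOn.congr
          ((Polynomial.continuous pt).continuousOn.div
            ((Polynomial.continuous qt).continuousOn)
            (fun w hw => hqt0 w (hsph w hw).le))
        intro w hw
        exact hrt w (hsph w hw).le
      exact continuous_norm.comp_continuousOn (hfc.sub hrtc)
    have hmle : ∀ z : ℂ, ‖z‖ = 1 →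
        sInf {y : ℝ | ∃ z : ℂ, ‖z‖ = 1 ∧ y = ‖e z‖} ≤ ‖e z‖ :=
      fun z hz => csInf_le hEbd ⟨z, hz, rfl⟩
    have key : ∀ z : ℂ, ‖z‖ = 1 → ‖f z - rt z‖ < ‖e z‖ :=
      fun z hz => lt_of_le_of_lt (hyb z hz) (lt_of_lt_of_le hcon (hmle z hz))
    set N : Polynomial ℂ := p * qt - pt * q with hN
    set Q : Polynomial ℂ := q * qt with hQ
    set g : ℂ → ℂ := fun z => N.eval z / Q.eval z with hg
    have hQ0 : ∀ z : ℂ, ‖z‖ ≤ 1 → Q.eval z ≠ 0 := by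
      intro z hz
      rw [hQ, eval_mul]
      exact mul_ne_zero (hq0 z hz) (hqt0 z hz)
    have hgrt : ∀ z : ℂ, ‖z‖ ≤ 1 → g z = p.eval z / q.eval z - rt z := by
      intro z hz
      have h1 := hq0 z hz
      have h2 := hqt0 z hz
      rw [hrt z hz, hg, hN, hQ]
      simp only [eval_mul, eval_sub]
      field_simp
    have hediff : ∀ z : ℂ, ‖z‖ = 1 → e z - g z = rt z - f z := by
      intro z hz
      rw [he z, hgrt z hz.le]
      ring
    have key2 : ∀ z : ℂ, ‖z‖ = 1 → ‖e z - g z‖ < ‖e z‖ := by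
      intro z hz
      rw [hediff z hz, norm_sub_rev]
      exact key z hz
    have hgne : ∀ z : ℂ, ‖z‖ = 1 → g z ≠ 0 := by
      intro z hz h0
      have h := key2 z hz
      rw [h0, sub_zero] at h
      exact lt_irrefl _ h
    have hNne : ∀ z : ℂ, ‖z‖ = 1 → N.eval z ≠ 0 := by
      intro z hz h0
      apply hgne z hz
      rw [hg]
      show N.eval z / Q.eval z = 0
      rw [h0, zero_div]
    have hN0 : N ≠ 0 := fun h => hNne 1 (by simp) (by rw [h]; simp)
    set u : ℂ → ℂ := fun z => e z / g z with hu
    have hure : ∀ z : ℂ, ‖z‖ = 1 → 0 < (u z).re := by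
      intro z hz
      have he0z := he0 z hz
      have hgz := hgne z hz
      set w : ℂ := g z / e z with hw
      have hwne : w ≠ 0 := div_ne_zero hgz he0z
      have h1w : ‖1 - w‖ < 1 := by
        have hrw : 1 - w = (e z - g z) / e z := by
          rw [hw]
          field_simp
        rw [hrw, norm_div, div_lt_one (norm_pos_iff.mpr he0z)]
        exact key2 z hz
      have h2 : Complex.normSq (1 - w) < 1 := by
        rw [← Complex.sq_norm]
        nlinarith [norm_nonneg (1 - w)]
      have h3 : 0 < Complex.normSq w := Complex.normSq_pos.mpr hwne
      have h4 : 0 < w.re := by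
        simp only [Complex.normSq_apply, Complex.sub_re, Complex.sub_im, Complex.one_re,
          Complex.one_im] at h2 h3
        nlinarith
      have huw : u z = w⁻¹ := by
        rw [hu, hw, inv_div]
      rw [huw, Complex.inv_re]
      exact div_pos h4 h3
    set V : Set ℂ := U ∩ ({z : ℂ | q.eval z ≠ 0} ∩ ({z : ℂ | Q.eval z ≠ 0} ∩ {z : ℂ | N.eval z ≠ 0})) with hV
    have hop : ∀ P : Polynomial ℂ, IsOpen {z : ℂ | P.eval z ≠ 0} :=
      fun P => isOpen_ne.preimage (Polynomial.continuous P)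
    have hVo : IsOpen V := hUo.inter ((hop q).inter ((hop Q).inter (hop N)))
    have hsubV : sphere (0:ℂ) 1 ⊆ V := by
      intro z hz
      have hz1 : ‖z‖ = 1 := hsph z hz
      exact ⟨hUsub (by rw [mem_closedBall_zero_iff, hz1]),
        hq0 z hz1.le, hQ0 z hz1.le, hNne z hz1⟩
    have hVdiffAt : ∀ z ∈ V, DifferentiableAt ℂ u z := by
      rintro z ⟨hzU, hzq, hzQ, hzN⟩
      have hfz : DifferentiableAt ℂ f z := hUd.differentiableAt (hUo.mem_nhds hzU)
      have hez : DifferentiableAt ℂ e z := by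
        rw [show e = fun z => p.eval z / q.eval z - f z from funext he]
        exact ((p.differentiableAt).div (q.differentiableAt) hzq).sub hfz
      have hgz : DifferentiableAt ℂ g z := by
        rw [hg]
        exact (N.differentiableAt).div (Q.differentiableAt) hzQ
      have hgz0 : g z ≠ 0 := by
        rw [hg]
        exact div_ne_zero hzN hzQ
      rw [hu]
      exact hez.div hgz hgz0
    have hudiff : DifferentiableOn ℂ u V := fun z hz => (hVdiffAt z hz).differentiableWithinAt
    have hune : ∀ z ∈ sphere (0:ℂ) 1, u z ≠ 0 := by
      intro z hz
      rw [hu]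
      exact div_ne_zero (he0 z (hsph z hz)) (hgne z (hsph z hz))
    have hfact : ∀ P : Polynomial ℂ, ∀ w : ℂ,
        P.eval w = P.leadingCoeff * ((P.roots.map fun a => w - a)).prod := by
      intro P w
      conv_lhs => rw [(IsAlgClosed.splits P).eq_prod_roots]
      rw [eval_mul, eval_C, Polynomial.eval_multiset_prod, Multiset.map_map]
      simp [Function.comp]
    have hQne1 : Q ≠ 0 := fun h => hQ0 1 (by simp) (by rw [h]; simp)
    have hQout : ∀ a ∈ Q.roots, 1 < ‖a‖ := by
      intro a ha
      by_contra hle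
      push_neg at hle
      exact hQ0 a hle (Polynomial.isRoot_of_mem_roots ha)
    have hNroots_ne : ∀ a ∈ N.roots, ‖a‖ ≠ 1 :=
      fun a ha h => hNne a h (Polynomial.isRoot_of_mem_roots ha)
    have hQroots_ne : ∀ a ∈ Q.roots, ‖a‖ ≠ 1 := fun a ha => (hQout a ha).ne'
    have hpoint : ∀ z ∈ sphere (0:ℂ) 1, deriv e z / e z
        = logDeriv u z + (((N.roots.map fun a => (z - a)⁻¹).sum)
            - ((Q.roots.map fun a => (z - a)⁻¹).sum)) := by
      intro z hz
      have hz1 := hsph z hz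
      have hEe : e =ᶠ[nhds z] fun w => u w * g w := by
        filter_upwards [hVo.mem_nhds (hsubV hz)] with x hx
        rcases hx with ⟨_, _, hxQ, hxN⟩
        have hgx : g x ≠ 0 := by
          rw [hg]
          exact div_ne_zero hxN hxQ
        show e x = u x * g x
        rw [hu]
        show e x = e x / g x * g x
        rw [div_mul_cancel₀ _ hgx]
      rw [← logDeriv_apply, aux_logDeriv_congr hEe]
      rw [logDeriv_mul z (hune z hz) (hgne z hz1) (hVdiffAt z (hsubV hz))
        (by rw [hg]; exact (N.differentiableAt).div (Q.differentiableAt) (hQ0 z hz1.le))]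
      congr 1
      have hgdiv : logDeriv g z = logDeriv (fun w : ℂ => N.eval w) z
          - logDeriv (fun w : ℂ => Q.eval w) z := by
        rw [hg]
        exact logDeriv_div z (hNne z hz1) (hQ0 z hz1.le) (N.differentiableAt) (Q.differentiableAt)
      rw [hgdiv]
      congr 1
      · rw [show (fun w : ℂ => N.eval w)
            = fun w => N.leadingCoeff * ((N.roots.map fun a => w - a)).prod from funext (hfact N)]
        rw [logDeriv_const_mul _ _ (Polynomial.leadingCoeff_ne_zero.mpr hN0)]
        apply aux_logDeriv_prod
        intro a ha hza
        exact hNne z hz1 (by rw [hza]; exact Polynomial.isRoot_of_mem_roots ha)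
      · rw [show (fun w : ℂ => Q.eval w)
            = fun w => Q.leadingCoeff * ((Q.roots.map fun a => w - a)).prod from funext (hfact Q)]
        rw [logDeriv_const_mul _ _ (Polynomial.leadingCoeff_ne_zero.mpr hQne1)]
        apply aux_logDeriv_prod
        intro a ha hza
        exact hQ0 z hz1.le (by rw [hza]; exact Polynomial.isRoot_of_mem_roots ha)
    have hint_u : CircleIntegrable (logDeriv u) 0 1 :=
      (aux_logDeriv_contOn u V hVo hsubV hudiff hune).circleIntegrable zero_le_one
    have hintN : CircleIntegrable (fun z : ℂ => (N.roots.map fun a => (z - a)⁻¹).sum) 0 1 :=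
      (aux_sum_contOn' _ hNroots_ne).circleIntegrable zero_le_one
    have hintQ : CircleIntegrable (fun z : ℂ => (Q.roots.map fun a => (z - a)⁻¹).sum) 0 1 :=
      (aux_sum_contOn' _ hQroots_ne).circleIntegrable zero_le_one
    have hintNQ : CircleIntegrable (fun z : ℂ => ((N.roots.map fun a => (z - a)⁻¹).sum)
        - ((Q.roots.map fun a => (z - a)⁻¹).sum)) 0 1 :=
      ((aux_sum_contOn' _ hNroots_ne).sub (aux_sum_contOn' _ hQroots_ne)).circleIntegrable
        zero_le_one
    have hQfilter : (Q.roots.filter (fun a => ‖a‖ < 1)) = 0 :=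
      Multiset.filter_eq_nil.mpr (fun a ha => not_lt.mpr (hQout a ha).le)
    have hIeq : (∮ z in C((0:ℂ), 1), deriv e z / e z)
        = 2 * (Real.pi : ℂ) * Complex.I
            * ((N.roots.filter (fun a => ‖a‖ < 1)).card : ℂ) := by
      rw [circleIntegral.integral_congr zero_le_one (fun z hz => hpoint z hz)]
      rw [aux_circleIntegral_add hint_u hintNQ]
      rw [circleIntegral.integral_sub hintN hintQ]
      rw [aux_logDeriv_integral_zero u V hVo hsubV hudiff (fun z hz => hure z (hsph z hz))]
      rw [aux_sum_integral _ hNroots_ne, aux_sum_integral _ hQroots_ne, hQfilter]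
      push_cast [Multiset.card_zero]
      ring
    have hωeq : (ω : ℂ) = ((N.roots.filter (fun a => ‖a‖ < 1)).card : ℂ) := by
      rw [← hwind, hIeq, inv_mul_cancel_left₀ Complex.two_pi_I_ne_zero]
    have hωnat : ω = (((N.roots.filter (fun a => ‖a‖ < 1)).card : ℕ) : ℤ) := by
      exact_mod_cast hωeq
    have hcard : ((N.roots.filter (fun a => ‖a‖ < 1)).card) ≤ ν + n := by
      calc ((N.roots.filter (fun a => ‖a‖ < 1)).card)
          ≤ Multiset.card N.roots := Multiset.card_le_card (Multiset.filter_le _ _)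
        _ ≤ N.natDegree := Polynomial.card_roots' N
        _ ≤ ν + n := by
            refine le_trans (Polynomial.natDegree_sub_le _ _) (max_le ?_ ?_)
            · exact le_trans Polynomial.natDegree_mul_le (add_le_add hp hqt)
            · refine le_trans Polynomial.natDegree_mul_le ?_
              have := add_le_add hpt hq
              omega
    omega
  · -- upper bound : E∞ ≤ sSup E
    calc sInf {y : ℝ | ∃ r : ℂ → ℂ, IsRatDeg n r ∧ y = LInfNorm (fun z => f z - r z)}
        ≤ LInfNorm (fun z => f z - p.eval z / q.eval z) := csInf_le ⟨0, hAlb⟩ hr0mem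
      _ = sSup {y : ℝ | ∃ z : ℂ, ‖z‖ = 1 ∧ y = ‖e z‖} := by
          rw [LInfNorm, hsetEq]
end

section
/- Let f be analytic on an open neighborhood of the closed unit disk, let ν and n be integers with 0 ≤ ν ≤ n, and let r ∈ R_ν be such that the error function e = r − f has constant modulus on the unit circle S (i.e., there is c > 0 with |e(z)| = c for all z ∈ S) and the winding number ω of the error curve e(S) about 0 satisfies ω ≥ ν + n + 1. Then r is a best L^∞ approximation to f from R_n: ‖f − r‖_∞ ≤ ‖f − r̃‖_∞ for every r̃ ∈ R_n. -/
open Complex Metric Polynomial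

section AuxLemmas

lemma shrink_ball {U : Set ℂ} (hU : IsOpen U) (hB : closedBall (0:ℂ) 1 ⊆ U) :
    ∃ ρ : ℝ, 1 < ρ ∧ closedBall (0:ℂ) ρ ⊆ U := by
  obtain ⟨δ, hδ, hsub⟩ := (isCompact_closedBall (0:ℂ) 1).exists_thickening_subset_open hU hB
  refine ⟨1 + δ/2, by linarith, ?_⟩
  intro x hx
  apply hsub
  rw [thickening_closedBall hδ zero_le_one]
  simp only [mem_closedBall, mem_ball] at *
  linarith

lemma prod_diff (M : Multiset ℂ) :
    Differentiable ℂ (fun w : ℂ => (M.map (fun t => w - t)).prod) := by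
  induction M using Multiset.induction_on with
  | empty => simpa using differentiable_const (1:ℂ)
  | cons a M ih =>
      simp only [Multiset.map_cons, Multiset.prod_cons]
      exact (differentiable_id.sub_const a).mul ih

lemma prod_ne_zero {M : Multiset ℂ} {z : ℂ} (h : ∀ t ∈ M, z ≠ t) :
    (M.map (fun t => z - t)).prod ≠ 0 := by
  rw [Ne, Multiset.prod_eq_zero_iff]
  intro hmem
  obtain ⟨t, ht, h0⟩ := Multiset.mem_map.mp hmem
  exact h t ht (by rwa [sub_eq_zero] at h0)

lemma cint_add {f g : ℂ → ℂ} {c : ℂ} {R : ℝ} (hf : CircleIntegrable f c R)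
    (hg : CircleIntegrable g c R) :
    (∮ z in C(c, R), (f z + g z)) = (∮ z in C(c, R), f z) + ∮ z in C(c, R), g z := by
  simp only [circleIntegral, smul_add, intervalIntegral.integral_add hf.out hg.out]

lemma winding_count (u : ℂ → ℂ) (V : Set ℂ) (hV : IsOpen V) (hVb : closedBall (0:ℂ) 1 ⊆ V)
    (hu : DifferentiableOn ℂ u V) (hu0 : ∀ z ∈ V, u z ≠ 0)
    (M : Multiset ℂ) (hM : ∀ t ∈ M, ‖t‖ ≠ 1) :
    (∮ z in C((0:ℂ),1), deriv (fun w => u w * (M.map (fun t => w - t)).prod) z /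
       (u z * (M.map (fun t => z - t)).prod))
      = 2 * Real.pi * I * (Multiset.card (M.filter (fun t => ‖t‖ < 1)) : ℂ) := by
  induction M using Multiset.induction_on with
  | empty =>
      simp only [Multiset.map_zero, Multiset.prod_zero, mul_one, Multiset.filter_zero,
        Multiset.card_zero, Nat.cast_zero, mul_zero]
      have hdu : DifferentiableOn ℂ (deriv u) V := (hu.analyticOnNhd hV).deriv.differentiableOn
      have hg : DifferentiableOn ℂ (fun z => deriv u z / u z) V := hdu.div hu hu0
      refine circleIntegral_eq_zero_of_differentiable_on_off_countable zero_le_one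
        Set.countable_empty (hg.continuousOn.mono hVb) (fun z hz => ?_)
      exact hg.differentiableAt (hV.mem_nhds (hVb (ball_subset_closedBall hz.1)))
  | cons a M ih =>
      have hsV : sphere (0:ℂ) 1 ⊆ V := sphere_subset_closedBall.trans hVb
      set P : ℂ → ℂ := fun w => (M.map (fun t => w - t)).prod with hP
      set F₀ : ℂ → ℂ := fun w => u w * P w with hF₀
      have hF₀d : DifferentiableOn ℂ F₀ V := hu.mul (prod_diff M).differentiableOn
      have hdF₀c : ContinuousOn (deriv F₀) V := (hF₀d.analyticOnNhd hV).deriv.continuousOn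
      have key : ∀ z ∈ sphere (0:ℂ) 1,
          deriv (fun w => u w * ((a ::ₘ M).map (fun t => w - t)).prod) z /
            (u z * ((a ::ₘ M).map (fun t => z - t)).prod)
          = (z - a)⁻¹ + deriv F₀ z / F₀ z := by
        intro z hz
        have hz1 : ‖z‖ = 1 := by simpa [Complex.dist_eq] using hz
        have hza : z ≠ a := fun h => hM a (Multiset.mem_cons_self a M) (h ▸ hz1)
        have hPz : P z ≠ 0 := prod_ne_zero (fun t ht h => hM t (Multiset.mem_cons_of_mem ht) (h ▸ hz1))
        have huz : u z ≠ 0 := hu0 z (hsV hz)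
        have hF₀z : F₀ z ≠ 0 := mul_ne_zero huz hPz
        have hfun : (fun w => u w * ((a ::ₘ M).map (fun t => w - t)).prod)
            = fun w => (w - a) * F₀ w := by
          funext w; simp only [Multiset.map_cons, Multiset.prod_cons, hF₀, hP]; ring
        rw [hfun]
        have hD : HasDerivAt (fun w => (w - a) * F₀ w)
            (1 * F₀ z + (z - a) * deriv F₀ z) z :=
          ((hasDerivAt_id z).sub_const a).mul
            ((hF₀d.differentiableAt (hV.mem_nhds (hsV hz))).hasDerivAt)
        rw [hD.deriv, Multiset.map_cons, Multiset.prod_cons]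
        have : u z * ((z - a) * P z) = (z - a) * F₀ z := by rw [hF₀]; ring
        rw [this]
        field_simp [sub_ne_zero.mpr hza]
      rw [circleIntegral.integral_congr zero_le_one key]
      have h1 : CircleIntegrable (fun z => (z - a)⁻¹) 0 1 := by
        apply ContinuousOn.circleIntegrable zero_le_one
        apply ContinuousOn.inv₀ (by fun_prop)
        intro z hz
        have hz1 : ‖z‖ = 1 := by simpa [Complex.dist_eq] using hz
        exact sub_ne_zero.mpr (fun h => hM a (Multiset.mem_cons_self a M) (h ▸ hz1))
      have h2 : CircleIntegrable (fun z => deriv F₀ z / F₀ z) 0 1 := by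
        apply ContinuousOn.circleIntegrable zero_le_one
        apply ContinuousOn.div (hdF₀c.mono hsV) ((hF₀d.continuousOn).mono hsV)
        intro z hz
        have hz1 : ‖z‖ = 1 := by simpa [Complex.dist_eq] using hz
        exact mul_ne_zero (hu0 z (hsV hz))
          (prod_ne_zero (fun t ht h => hM t (Multiset.mem_cons_of_mem ht) (h ▸ hz1)))
      rw [cint_add h1 h2]
      have ih' : (∮ z in C((0:ℂ),1), deriv F₀ z / F₀ z)
          = 2 * Real.pi * I * (Multiset.card (M.filter (fun t => ‖t‖ < 1)) : ℂ) :=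
        ih (fun t ht => hM t (Multiset.mem_cons_of_mem ht))
      rw [ih']
      by_cases ha : ‖a‖ < 1
      · rw [circleIntegral.integral_sub_inv_of_mem_ball (by simpa [Complex.dist_eq] using ha),
          Multiset.filter_cons_of_pos (p := fun t => ‖t‖ < 1) M ha]
        rw [Multiset.card_cons]
        push_cast
        ring
      · have ha1 : 1 < ‖a‖ := lt_of_le_of_ne (not_lt.mp ha)
          (fun h => hM a (Multiset.mem_cons_self a M) h.symm)
        have : (∮ z in C((0:ℂ),1), (z - a)⁻¹) = 0 := by
          refine circleIntegral_eq_zero_of_differentiable_on_off_countable zero_le_one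
            Set.countable_empty ?_ (fun z hz => ?_)
          · apply ContinuousOn.inv₀ (by fun_prop)
            intro z hz
            refine sub_ne_zero.mpr (fun h => ?_)
            rw [mem_closedBall, Complex.dist_eq, sub_zero] at hz
            rw [h] at hz; linarith
          · have hz' : ‖z‖ < 1 := by
              simpa [Complex.dist_eq] using hz.1
            exact (differentiableAt_id.sub_const a).inv
              (sub_ne_zero.mpr (fun h => by simp only [id] at h; rw [h] at hz'; linarith))
        rw [this, Multiset.filter_cons_of_neg (p := fun t => ‖t‖ < 1) M ha]
        ring

lemma wind_eq (d e : ℂ → ℂ)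
    (h : ∀ z ∈ sphere (0:ℂ) 1, DifferentiableAt ℂ d z ∧ DifferentiableAt ℂ e z ∧
        d z ≠ 0 ∧ e z ≠ 0 ∧ d z / e z ∈ Complex.slitPlane)
    (hd : CircleIntegrable (fun z => deriv d z / d z) 0 1)
    (he : CircleIntegrable (fun z => deriv e z / e z) 0 1) :
    (∮ z in C((0:ℂ),1), deriv d z / d z) = ∮ z in C((0:ℂ),1), deriv e z / e z := by
  have h0 : (∮ z in C((0:ℂ),1), (deriv d z / d z - deriv e z / e z)) = 0 := by
    apply circleIntegral.integral_eq_zero_of_hasDerivWithinAt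
      (f := fun z => Complex.log (d z / e z)) zero_le_one
    intro z hz
    obtain ⟨hdd, hde, hd0, he0, hsl⟩ := h z hz
    have hq : HasDerivAt (fun w => d w / e w)
        ((deriv d z * e z - d z * deriv e z) / (e z)^2) z :=
      hdd.hasDerivAt.div hde.hasDerivAt he0
    have hL := hq.clog hsl
    have : (deriv d z * e z - d z * deriv e z) / e z ^ 2 / (d z / e z)
        = deriv d z / d z - deriv e z / e z := by
      field_simp
    rw [this] at hL
    exact hL.hasDerivWithinAt
  have hsub := circleIntegral.integral_sub hd he
  rw [h0] at hsub
  linear_combination -hsub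

end AuxLemmas

/-- Exactly circular error curve with large winding number ⇒ best L^∞ approximation. -/
theorem stmt1 (f : ℂ → ℂ)
    (hf : ∃ U : Set ℂ, IsOpen U ∧ closedBall (0:ℂ) 1 ⊆ U ∧ DifferentiableOn ℂ f U)
    (ν n : ℕ) (hνn : ν ≤ n)
    (p q : Polynomial ℂ) (hp : p.natDegree ≤ ν) (hq : q.natDegree ≤ ν)
    (hq0 : ∀ z : ℂ, ‖z‖ ≤ 1 → q.eval z ≠ 0)
    (e : ℂ → ℂ) (he : ∀ z : ℂ, e z = p.eval z / q.eval z - f z)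
    (c : ℝ) (hc : 0 < c)
    (hcirc : ∀ z : ℂ, ‖z‖ = 1 → ‖e z‖ = c)
    (ω : ℤ) (hω : (ν : ℤ) + (n : ℤ) + 1 ≤ ω)
    (hwind : (2 * (Real.pi : ℂ) * Complex.I)⁻¹ *
      (∮ z in C((0:ℂ), 1), deriv e z / e z) = (ω : ℂ)) :
    ∀ rt : ℂ → ℂ, IsRatDeg n rt →
      LInfNorm (fun z => f z - p.eval z / q.eval z) ≤ LInfNorm (fun z => f z - rt z) := by
  intro rt hrt
  obtain ⟨pt, qt, hpt, hqt, hqt0, hrteq⟩ := hrt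
  obtain ⟨U, hUo, hUb, hfd⟩ := hf
  have heF : e = fun z => p.eval z / q.eval z - f z := funext he
  subst heF
  -- compute LHS = c
  have habs : ∀ z : ℂ, ‖z‖ = 1 →
      ‖f z - p.eval z / q.eval z‖ = c := by
    intro z hz
    have := hcirc z hz
    rw [← this]
    rw [show f z - p.eval z / q.eval z = -(p.eval z / q.eval z - f z) by ring, norm_neg]
  have hLHS : LInfNorm (fun z => f z - p.eval z / q.eval z) = c := by
    unfold LInfNorm
    have hset : {y : ℝ | ∃ z : ℂ, ‖z‖ = 1 ∧
        y = ‖(fun z => f z - p.eval z / q.eval z) z‖} = {c} := by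
      ext y
      simp only [Set.mem_setOf_eq, Set.mem_singleton_iff]
      constructor
      · rintro ⟨z, hz, rfl⟩; exact habs z hz
      · rintro rfl; exact ⟨1, by simp, (habs 1 (by simp)).symm⟩
    rw [hset, csSup_singleton]
  rw [hLHS]
  by_contra hlt
  push_neg at hlt
  -- pointwise bound on the sphere
  have hmem : ∀ z : ℂ, ‖z‖ = 1 → z ∈ closedBall (0:ℂ) 1 := by
    intro z hz; simp [Complex.dist_eq, hz]
  have hbdd : BddAbove {y : ℝ | ∃ z : ℂ, ‖z‖ = 1 ∧
      y = ‖(fun z => f z - rt z) z‖} := by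
    have himg : {y : ℝ | ∃ z : ℂ, ‖z‖ = 1 ∧
        y = ‖(fun z => f z - rt z) z‖}
        = (fun z => ‖f z - rt z‖) '' sphere (0:ℂ) 1 := by
      ext y
      simp only [Set.mem_setOf_eq, Set.mem_image, mem_sphere_iff_norm, sub_zero]
      constructor
      · rintro ⟨z, hz, rfl⟩; exact ⟨z, hz, rfl⟩
      · rintro ⟨z, hz, rfl⟩; exact ⟨z, hz, rfl⟩
    rw [himg]
    have hq : ContinuousOn (fun z => pt.eval z / qt.eval z) (sphere (0:ℂ) 1) := by
      apply ContinuousOn.div (by fun_prop) (by fun_prop)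
      intro z hz
      have hz1 : ‖z‖ = 1 := by simpa [Complex.dist_eq] using hz
      exact hqt0 z hz1.le
    have hrtc : ContinuousOn rt (sphere (0:ℂ) 1) := by
      apply hq.congr
      intro z hz
      have hz1 : ‖z‖ = 1 := by simpa [Complex.dist_eq] using hz
      exact hrteq z hz1.le
    have h1 : ContinuousOn (fun z => f z - rt z) (sphere (0:ℂ) 1) :=
      (hfd.continuousOn.mono (sphere_subset_closedBall.trans hUb)).sub hrtc
    have hcont : ContinuousOn (fun z => ‖f z - rt z‖) (sphere (0:ℂ) 1) :=
      continuous_norm.comp_continuousOn h1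
    exact ((isCompact_sphere (0:ℂ) 1).image_of_continuousOn hcont).bddAbove
  have hpoint : ∀ z : ℂ, ‖z‖ = 1 → ‖f z - rt z‖ < c := by
    intro z hz
    refine lt_of_le_of_lt ?_ hlt
    exact le_csSup hbdd ⟨z, hz, rfl⟩
  -- set up the open neighborhood V of the closed disk
  have hWo : IsOpen (U ∩ ({z : ℂ | q.eval z ≠ 0} ∩ {z : ℂ | qt.eval z ≠ 0})) := by
    apply hUo.inter
    apply IsOpen.inter
    · exact isOpen_compl_iff.mpr (isClosed_eq (by fun_prop) continuous_const)
    · exact isOpen_compl_iff.mpr (isClosed_eq (by fun_prop) continuous_const)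
  have hWb : closedBall (0:ℂ) 1 ⊆ U ∩ ({z : ℂ | q.eval z ≠ 0} ∩ {z : ℂ | qt.eval z ≠ 0}) := by
    intro z hz
    have hz1 : ‖z‖ ≤ 1 := by simpa [Complex.dist_eq] using hz
    exact ⟨hUb hz, hq0 z hz1, hqt0 z hz1⟩
  obtain ⟨ρ, hρ1, hρW⟩ := shrink_ball hWo hWb
  set V : Set ℂ := ball (0:ℂ) ρ with hV
  have hVo : IsOpen V := isOpen_ball
  have hVb : closedBall (0:ℂ) 1 ⊆ V := closedBall_subset_ball hρ1
  have hVW : V ⊆ U ∩ ({z : ℂ | q.eval z ≠ 0} ∩ {z : ℂ | qt.eval z ≠ 0}) :=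
    ball_subset_closedBall.trans hρW
  have hVU : V ⊆ U := fun z hz => (hVW hz).1
  have hVq : ∀ z ∈ V, q.eval z ≠ 0 := fun z hz => (hVW hz).2.1
  have hVqt : ∀ z ∈ V, qt.eval z ≠ 0 := fun z hz => (hVW hz).2.2
  have hsV : sphere (0:ℂ) 1 ⊆ V := sphere_subset_closedBall.trans hVb
  -- the error functions
  set e : ℂ → ℂ := fun z => p.eval z / q.eval z - f z with heq
  set et : ℂ → ℂ := fun z => pt.eval z / qt.eval z - f z with heteq
  set d : ℂ → ℂ := fun z => e z - et z with hdeq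
  have heD : DifferentiableOn ℂ e V := by
    apply DifferentiableOn.sub _ (hfd.mono hVU)
    exact DifferentiableOn.div p.differentiable.differentiableOn q.differentiable.differentiableOn hVq
  have hetD : DifferentiableOn ℂ et V := by
    apply DifferentiableOn.sub _ (hfd.mono hVU)
    exact DifferentiableOn.div pt.differentiable.differentiableOn qt.differentiable.differentiableOn hVqt
  have hdD : DifferentiableOn ℂ d V := heD.sub hetD
  -- sphere facts
  have hetlt : ∀ z : ℂ, ‖z‖ = 1 → ‖et z‖ < c := by
    intro z hz
    have : et z = -(f z - rt z) := by
      rw [heteq, hrteq z hz.le]; ring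
    rw [this, norm_neg]
    exact hpoint z hz
  have he0 : ∀ z : ℂ, ‖z‖ = 1 → e z ≠ 0 := by
    intro z hz h0
    have := hcirc z hz
    simp only [h0] at this
    simp at this
    rw [← this] at hc
    exact lt_irrefl _ hc
  have hd0 : ∀ z : ℂ, ‖z‖ = 1 → d z ≠ 0 := by
    intro z hz h0
    have h1 : e z = et z := by rw [hdeq] at h0; simpa [sub_eq_zero] using h0
    have := hetlt z hz
    rw [← h1, hcirc z hz] at this
    exact lt_irrefl _ this
  have hslit : ∀ z : ℂ, ‖z‖ = 1 → d z / e z ∈ Complex.slitPlane := by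
    intro z hz
    rw [Complex.mem_slitPlane_iff]
    left
    have he0' := he0 z hz
    have hrat : d z / e z = 1 - et z / e z := by
      rw [hdeq]; field_simp
    rw [hrat]
    have h1 : (et z / e z).re ≤ ‖et z / e z‖ := Complex.re_le_norm _
    have h2 : ‖et z / e z‖ < 1 := by
      rw [norm_div, hcirc z hz, div_lt_one hc]
      exact hetlt z hz
    simp only [Complex.sub_re, Complex.one_re]
    linarith
  have habs_mem : ∀ z : ℂ, ‖z‖ = 1 → z ∈ sphere (0:ℂ) 1 := by
    intro z hz; simp [Complex.dist_eq, hz]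
  have habs_of_mem : ∀ z : ℂ, z ∈ sphere (0:ℂ) 1 → ‖z‖ = 1 := by
    intro z hz; simpa [Complex.dist_eq] using hz
  -- integrability of logarithmic derivatives
  have hdercont : ∀ g : ℂ → ℂ, DifferentiableOn ℂ g V →
      (∀ z ∈ sphere (0:ℂ) 1, g z ≠ 0) →
      CircleIntegrable (fun z => deriv g z / g z) 0 1 := by
    intro g hg hg0
    apply ContinuousOn.circleIntegrable zero_le_one
    exact ContinuousOn.div (((hg.analyticOnNhd hVo).deriv.continuousOn).mono hsV)
      (hg.continuousOn.mono hsV) hg0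
  have hie : CircleIntegrable (fun z => deriv e z / e z) 0 1 :=
    hdercont e heD (fun z hz => he0 z (habs_of_mem z hz))
  have hid : CircleIntegrable (fun z => deriv d z / d z) 0 1 :=
    hdercont d hdD (fun z hz => hd0 z (habs_of_mem z hz))
  have h2pi : (2 * (Real.pi:ℂ) * I) ≠ 0 :=
    mul_ne_zero (mul_ne_zero two_ne_zero (Complex.ofReal_ne_zero.mpr Real.pi_ne_zero))
      Complex.I_ne_zero
  rw [inv_mul_eq_iff_eq_mul₀ h2pi] at hwind
  -- the rational function d = N/Q
  set N : Polynomial ℂ := p * qt - q * pt with hNdef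
  set Q : Polynomial ℂ := q * qt with hQdef
  have hQ0 : ∀ z ∈ V, Q.eval z ≠ 0 := by
    intro z hz
    rw [hQdef, eval_mul]
    exact mul_ne_zero (hVq z hz) (hVqt z hz)
  have hd_expr : ∀ z : ℂ, d z = p.eval z / q.eval z - pt.eval z / qt.eval z := by
    intro z; simp only [hdeq, heq, heteq]; ring
  have hNQ : ∀ z ∈ V, d z = N.eval z / Q.eval z := by
    intro z hz
    rw [hd_expr z, div_sub_div _ _ (hVq z hz) (hVqt z hz), hNdef, hQdef]
    simp [eval_mul, eval_sub]
  have hN0 : N ≠ 0 := by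
    intro h
    have h1 : (1:ℂ) ∈ sphere (0:ℂ) 1 := habs_mem 1 (by simp)
    apply hd0 1 (by simp)
    rw [hNQ 1 (hsV h1), h]
    simp
  have hM : ∀ t ∈ N.roots, ‖t‖ ≠ 1 := by
    intro t ht h1
    apply hd0 t h1
    rw [hNQ t (hsV (habs_mem t h1))]
    have : N.eval t = 0 := (Polynomial.mem_roots hN0).mp ht
    simp [this]
  -- factorization of N
  have hsplits : N = C N.leadingCoeff * (N.roots.map fun a => X - C a).prod :=
    (IsAlgClosed.splits N).eq_prod_roots
  have hfact : ∀ z : ℂ, N.eval z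
      = N.leadingCoeff * (N.roots.map (fun t => z - t)).prod := by
    intro z
    conv_lhs => rw [hsplits]
    simp [eval_multiset_prod, Multiset.map_map, Function.comp]
  set u : ℂ → ℂ := fun z => N.leadingCoeff / Q.eval z with hudef
  have huD : DifferentiableOn ℂ u V :=
    (differentiableOn_const _).div Q.differentiable.differentiableOn hQ0
  have hu0 : ∀ z ∈ V, u z ≠ 0 := by
    intro z hz
    exact div_ne_zero (Polynomial.leadingCoeff_ne_zero.mpr hN0) (hQ0 z hz)
  have hdF : Set.EqOn d (fun w => u w * ((N.roots.map (fun t => w - t)).prod)) V := by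
    intro z hz
    rw [hNQ z hz, hfact z]
    simp only [hudef]
    field_simp
  -- winding number of d
  have hwd : (∮ z in C((0:ℂ),1), deriv d z / d z)
      = 2 * Real.pi * I *
        (Multiset.card (N.roots.filter (fun t => ‖t‖ < 1)) : ℂ) := by
    rw [← winding_count u V hVo hVb huD hu0 N.roots hM]
    apply circleIntegral.integral_congr zero_le_one
    intro z hz
    have hzV : z ∈ V := hsV hz
    have hderiv : deriv d z
        = deriv (fun w => u w * ((N.roots.map (fun t => w - t)).prod)) z := by
      apply Filter.EventuallyEq.deriv_eq
      exact Filter.eventuallyEq_of_mem (hVo.mem_nhds hzV) hdF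
    simp only [hderiv, hdF hzV]
  -- windings are equal
  have hde := wind_eq d e (fun z hz =>
    ⟨hdD.differentiableAt (hVo.mem_nhds (hsV hz)),
     heD.differentiableAt (hVo.mem_nhds (hsV hz)),
     hd0 z (habs_of_mem z hz), he0 z (habs_of_mem z hz),
     hslit z (habs_of_mem z hz)⟩) hid hie
  rw [hwd, hwind] at hde
  have hkω : ((Multiset.card (N.roots.filter (fun t => ‖t‖ < 1)) : ℕ) : ℂ)
      = (ω : ℂ) := by
    have := mul_left_cancel₀ h2pi (by linear_combination hde :
      2 * (Real.pi:ℂ) * I * (Multiset.card (N.roots.filter (fun t => ‖t‖ < 1)) : ℂ)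
        = 2 * (Real.pi:ℂ) * I * (ω:ℂ))
    exact this
  have hkω' : ((Multiset.card (N.roots.filter (fun t => ‖t‖ < 1)) : ℕ) : ℤ) = ω := by
    exact_mod_cast hkω
  have hk : Multiset.card (N.roots.filter (fun t => ‖t‖ < 1)) ≤ ν + n := by
    calc Multiset.card (N.roots.filter (fun t => ‖t‖ < 1))
        ≤ Multiset.card N.roots := Multiset.card_le_card (Multiset.filter_le _ _)
      _ ≤ N.natDegree := N.card_roots'
      _ ≤ ν + n := by
          rw [hNdef]
          apply le_trans (Polynomial.natDegree_sub_le _ _)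
          apply max_le
          · exact Polynomial.natDegree_mul_le.trans (add_le_add hp hqt)
          · exact Polynomial.natDegree_mul_le.trans
              (by simpa [Nat.add_comm] using add_le_add hq hpt)
  omega
end

section
/- Let f be analytic on an open neighborhood of the closed unit disk, let n ≥ 0, and let r ∈ R_n. Set c = f(0) − r(0). Then r + c ∈ R_n and ‖f − (r + c)‖₂² = ‖f − r‖₂² − |c|². In particular, if r(0) ≠ f(0), then r + c is a strictly better L² approximation to f than r, so every best L² approximation r* ∈ R_n to f satisfies r*(0) = f(0). -/
open Complex Metric Polynomial

/-- the root-mean-square norm over the unit circle -/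
noncomputable def L2Norm (g : ℂ → ℂ) : ℝ :=
  Real.sqrt ((2 * Real.pi)⁻¹ *
    ∫ θ in (0:ℝ)..(2 * Real.pi), ‖g (Complex.exp (θ * Complex.I))‖ ^ 2)


/-- Mean value property over the unit circle. -/
lemma circle_mean (g : ℂ → ℂ) (hg : DiffContOnCl ℂ g (ball (0:ℂ) 1)) :
    (∫ θ in (0:ℝ)..(2 * Real.pi), g (Complex.exp (θ * Complex.I))) = 2 * Real.pi * g 0 := by
  have h0 : (0:ℂ) ∈ ball (0:ℂ) 1 := by simp
  have h := hg.circleIntegral_sub_inv_smul h0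
  have hI : (∮ z in C((0:ℂ), 1), (z - 0)⁻¹ • g z)
      = ∫ θ in (0:ℝ)..(2 * Real.pi), Complex.I * g (Complex.exp (θ * Complex.I)) := by
    rw [circleIntegral]
    refine intervalIntegral.integral_congr fun θ _ => ?_
    have hmap : circleMap 0 1 θ = Complex.exp (θ * Complex.I) := by
      simp [circleMap]
    have hne : Complex.exp (θ * Complex.I) ≠ 0 := Complex.exp_ne_zero _
    simp only [deriv_circleMap, hmap, smul_eq_mul, sub_zero]
    field_simp
  rw [hI, intervalIntegral.integral_const_mul] at h
  have h2 : Complex.I * (∫ θ in (0:ℝ)..(2 * Real.pi), g (Complex.exp (θ * Complex.I)))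
      = Complex.I * (2 * Real.pi * g 0) := by
    rw [h, smul_eq_mul]; push_cast; ring
  exact mul_left_cancel₀ Complex.I_ne_zero h2

lemma key (f : ℂ → ℂ)
    (hf : ∃ U : Set ℂ, IsOpen U ∧ closedBall (0:ℂ) 1 ⊆ U ∧ DifferentiableOn ℂ f U)
    (n : ℕ) (r : ℂ → ℂ) (hr : IsRatDeg n r)
    (c : ℂ) (hc : c = f 0 - r 0) :
    IsRatDeg n (fun z => r z + c) ∧
    L2Norm (fun z => f z - (r z + c)) ^ 2 = L2Norm (fun z => f z - r z) ^ 2 - ‖c‖ ^ 2 ∧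
    (r 0 ≠ f 0 → L2Norm (fun z => f z - (r z + c)) < L2Norm (fun z => f z - r z)) := by
  obtain ⟨U, hUo, hUb, hfd⟩ := hf
  obtain ⟨p, q, hp, hq, hqz, hrpq⟩ := hr
  -- part 1
  have part1 : IsRatDeg n (fun z => r z + c) := by
    refine ⟨p + Polynomial.C c * q, q, ?_, hq, hqz, ?_⟩
    · refine le_trans (Polynomial.natDegree_add_le _ _) (max_le hp ?_)
      exact le_trans (Polynomial.natDegree_mul_le) (by simpa using hq)
    · intro z hz
      have hqne := hqz z hz
      show r z + c = _
      rw [hrpq z hz]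
      simp only [Polynomial.eval_add, Polynomial.eval_mul, Polynomial.eval_C]
      field_simp
  -- analytic properties of g = f - r
  set g : ℂ → ℂ := fun z => f z - r z with hgdef
  have hball : ball (0:ℂ) 1 ⊆ closedBall (0:ℂ) 1 := ball_subset_closedBall
  have habs : ∀ z ∈ closedBall (0:ℂ) 1, ‖z‖ ≤ 1 := by
    intro z hz; simpa [Complex.dist_eq] using mem_closedBall.mp hz
  have hrd : DifferentiableOn ℂ r (ball (0:ℂ) 1) := by
    refine (DifferentiableOn.div (p.differentiable_aeval.differentiableOn)
      (q.differentiable_aeval.differentiableOn) ?_).congr ?_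
    · intro z hz; exact hqz z (habs z (hball hz))
    · intro z hz; exact hrpq z (habs z (hball hz))
  have hrc : ContinuousOn r (closedBall (0:ℂ) 1) := by
    refine (ContinuousOn.div (p.continuous_aeval.continuousOn)
      (q.continuous_aeval.continuousOn) ?_).congr ?_
    · intro z hz; exact hqz z (habs z hz)
    · intro z hz; exact hrpq z (habs z hz)
  have hgd : DiffContOnCl ℂ g (ball (0:ℂ) 1) := by
    constructor
    · exact ((hfd.mono (le_trans hball hUb)).sub hrd)
    · rw [closure_ball (0:ℂ) one_ne_zero]
      exact ((hfd.continuousOn.mono hUb).sub hrc)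
  have hgc : ContinuousOn g (closedBall (0:ℂ) 1) := (hfd.continuousOn.mono hUb).sub hrc
  -- mean value
  have hg0 : g 0 = c := by rw [hc]
  have hmean : (∫ θ in (0:ℝ)..(2 * Real.pi), g (Complex.exp (θ * Complex.I)))
      = 2 * Real.pi * c := by rw [circle_mean g hgd, hg0]
  -- continuity of circle restriction
  have hmem : ∀ θ : ℝ, Complex.exp (θ * Complex.I) ∈ closedBall (0:ℂ) 1 := by
    intro θ
    simp [Complex.dist_eq, Complex.norm_exp_ofReal_mul_I]
  have hexpc : Continuous (fun θ : ℝ => Complex.exp (θ * Complex.I)) :=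
    Complex.continuous_exp.comp (Complex.continuous_ofReal.mul continuous_const)
  have hcont : Continuous (fun θ : ℝ => g (Complex.exp (θ * Complex.I))) :=
    hgc.comp_continuous hexpc hmem
  set G : ℝ → ℂ := fun θ => g (Complex.exp (θ * Complex.I)) with hGdef
  -- integral computation
  have hint1 : IntervalIntegrable (fun θ => ‖G θ‖ ^ 2) MeasureTheory.volume 0 (2*Real.pi) :=
    ((continuous_norm.comp hcont).pow 2).intervalIntegrable 0 (2*Real.pi)
  have hint2 : IntervalIntegrable (fun θ => 2 * (G θ * (starRingEnd ℂ) c).re) MeasureTheory.volume 0 (2*Real.pi) :=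
    (continuous_const.mul (Complex.continuous_re.comp (hcont.mul continuous_const))).intervalIntegrable 0 (2*Real.pi)
  have hint2' : IntervalIntegrable (fun θ => G θ * (starRingEnd ℂ) c) MeasureTheory.volume 0 (2*Real.pi) :=
    (hcont.mul continuous_const).intervalIntegrable 0 (2*Real.pi)
  have hπpos : (0:ℝ) < Real.pi := Real.pi_pos
  have hptwise : ∀ θ : ℝ, ‖G θ - c‖ ^ 2
      = ‖G θ‖ ^ 2 - 2 * (G θ * (starRingEnd ℂ) c).re + Complex.normSq c := by
    intro θ
    rw [Complex.sq_norm, Complex.sq_norm, Complex.normSq_sub]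
    ring
  have hre : (∫ θ in (0:ℝ)..(2*Real.pi), (G θ * (starRingEnd ℂ) c).re)
      = 2 * Real.pi * Complex.normSq c := by
    have := Complex.reCLM.intervalIntegral_comp_comm hint2'
    have hiG : (∫ θ in (0:ℝ)..(2*Real.pi), G θ * (starRingEnd ℂ) c)
        = (2 * Real.pi * c) * (starRingEnd ℂ) c := by
      rw [intervalIntegral.integral_mul_const, hmean]
    rw [show (fun θ => (G θ * (starRingEnd ℂ) c).re) = fun θ => Complex.reCLM (G θ * (starRingEnd ℂ) c) from rfl] at *
    rw [this, hiG]
    have : (2 * (Real.pi:ℝ) : ℂ) * c * (starRingEnd ℂ) c = ((2 * Real.pi * Complex.normSq c : ℝ) : ℂ) := by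
      rw [mul_assoc, Complex.mul_conj]; push_cast; ring
    simp only [Complex.reCLM_apply]
    rw [show ((2:ℂ) * (Real.pi:ℝ)) * c * (starRingEnd ℂ) c = ((2 * Real.pi * Complex.normSq c : ℝ) : ℂ) from by
      rw [mul_assoc, Complex.mul_conj]; push_cast; ring]
    exact Complex.ofReal_re _
  have hIsub : (∫ θ in (0:ℝ)..(2*Real.pi), ‖G θ - c‖ ^ 2)
      = (∫ θ in (0:ℝ)..(2*Real.pi), ‖G θ‖ ^ 2) - 2 * Real.pi * Complex.normSq c := by
    calc (∫ θ in (0:ℝ)..(2*Real.pi), ‖G θ - c‖ ^ 2)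
        = ∫ θ in (0:ℝ)..(2*Real.pi),
            (‖G θ‖ ^ 2 - 2 * (G θ * (starRingEnd ℂ) c).re + Complex.normSq c) := by
          exact intervalIntegral.integral_congr fun θ _ => hptwise θ
      _ = (∫ θ in (0:ℝ)..(2*Real.pi), (‖G θ‖ ^ 2 - 2 * (G θ * (starRingEnd ℂ) c).re))
            + ∫ θ in (0:ℝ)..(2*Real.pi), (Complex.normSq c : ℝ) := by
          exact intervalIntegral.integral_add (hint1.sub hint2) (intervalIntegrable_const)
      _ = (∫ θ in (0:ℝ)..(2*Real.pi), ‖G θ‖ ^ 2)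
            - (∫ θ in (0:ℝ)..(2*Real.pi), 2 * (G θ * (starRingEnd ℂ) c).re)
            + (2 * Real.pi) * Complex.normSq c := by
          rw [intervalIntegral.integral_sub hint1 hint2, intervalIntegral.integral_const]
          simp
      _ = _ := by
          rw [intervalIntegral.integral_const_mul, hre]; ring
  -- L2 norms
  have hfun : (fun θ : ℝ => ‖(fun z => f z - (r z + c)) (Complex.exp (θ * Complex.I))‖ ^ 2)
      = fun θ => ‖G θ - c‖ ^ 2 := by
    funext θ; simp [hGdef, hgdef]; ring_nf
  have hnn1 : 0 ≤ (∫ θ in (0:ℝ)..(2*Real.pi), ‖G θ‖ ^ 2) := by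
    apply intervalIntegral.integral_nonneg (by positivity)
    intro θ _; positivity
  have hnn2 : 0 ≤ (∫ θ in (0:ℝ)..(2*Real.pi), ‖G θ - c‖ ^ 2) := by
    apply intervalIntegral.integral_nonneg (by positivity)
    intro θ _; positivity
  have hab : ‖c‖ ^ 2 = Complex.normSq c := Complex.sq_norm c
  have hL2new : L2Norm (fun z => f z - (r z + c)) ^ 2
      = (2 * Real.pi)⁻¹ * (∫ θ in (0:ℝ)..(2*Real.pi), ‖G θ - c‖ ^ 2) := by
    rw [L2Norm, hfun, Real.sq_sqrt (by positivity)]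
  have hL2old : L2Norm (fun z => f z - r z) ^ 2
      = (2 * Real.pi)⁻¹ * (∫ θ in (0:ℝ)..(2*Real.pi), ‖G θ‖ ^ 2) := by
    rw [L2Norm, Real.sq_sqrt (by positivity)]
  have part2 : L2Norm (fun z => f z - (r z + c)) ^ 2
      = L2Norm (fun z => f z - r z) ^ 2 - ‖c‖ ^ 2 := by
    rw [hL2new, hL2old, hIsub, hab]
    field_simp
  refine ⟨part1, part2, ?_⟩
  intro hne
  have hcne : c ≠ 0 := by rw [hc]; exact sub_ne_zero.mpr (Ne.symm hne)
  have hcpos : 0 < ‖c‖ ^ 2 := pow_pos (norm_pos_iff.mpr hcne) 2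
  by_contra hle
  push_neg at hle
  have hb : (0:ℝ) ≤ L2Norm (fun z => f z - r z) := Real.sqrt_nonneg _
  have h2 : L2Norm (fun z => f z - r z) ^ 2 ≤ L2Norm (fun z => f z - (r z + c)) ^ 2 :=
    pow_le_pow_left₀ hb hle 2
  nlinarith [part2, h2, hcpos]

/-- Adding the constant `c = f(0) − r(0)` to `r ∈ R_n` yields another member of `R_n` and
reduces the squared L² error by `|c|²`; consequently every best L² approximation
interpolates `f` at the origin. -/
theorem stmt4 (f : ℂ → ℂ)
    (hf : ∃ U : Set ℂ, IsOpen U ∧ closedBall (0:ℂ) 1 ⊆ U ∧ DifferentiableOn ℂ f U)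
    (n : ℕ) (r : ℂ → ℂ) (hr : IsRatDeg n r)
    (c : ℂ) (hc : c = f 0 - r 0) :
    IsRatDeg n (fun z => r z + c) ∧
    L2Norm (fun z => f z - (r z + c)) ^ 2 = L2Norm (fun z => f z - r z) ^ 2 - ‖c‖ ^ 2 ∧
    (r 0 ≠ f 0 → L2Norm (fun z => f z - (r z + c)) < L2Norm (fun z => f z - r z)) ∧
    (∀ rstar : ℂ → ℂ, IsRatDeg n rstar →
      (∀ s : ℂ → ℂ, IsRatDeg n s →
        L2Norm (fun z => f z - rstar z) ≤ L2Norm (fun z => f z - s z)) →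
      rstar 0 = f 0) := by
  obtain ⟨h1, h2, h3⟩ := key f hf n r hr c hc
  refine ⟨h1, h2, h3, ?_⟩
  intro rstar hstar hbest
  by_contra hne
  obtain ⟨hs1, _, hs3⟩ := key f hf n rstar hstar (f 0 - rstar 0) rfl
  exact absurd (hbest _ hs1) (not_le.mpr (hs3 hne))
end

section
/- Let f be analytic on an open neighborhood of the closed unit disk, let n ≥ 0, let r ∈ R_n, and suppose there is a constant c > 0 such that |r(z) − f(z)| = c for every z on the unit circle S (i.e., the error curve is exactly circular). Then f is a rational function: there exist complex polynomials P and Q, with Q having no zeros in the closed unit disk, such that f(z) = P(z)/Q(z) for all z in the closed unit disk. -/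
open Complex Metric Polynomial Set Filter Topology
open scoped Classical

noncomputable def AnalyticAt.order {g : ℂ → ℂ} {a : ℂ} (_h : AnalyticAt ℂ g a) : ℕ∞ :=
  analyticOrderAt g a

lemma AnalyticAt.order_eq_top_iff {g : ℂ → ℂ} {a : ℂ} (h : AnalyticAt ℂ g a) :
    h.order = ⊤ ↔ ∀ᶠ z in 𝓝 a, g z = 0 := analyticOrderAt_eq_top

lemma AnalyticAt.order_eq_nat_iff {g : ℂ → ℂ} {a : ℂ} (h : AnalyticAt ℂ g a) (n : ℕ) :
    h.order = n ↔ ∃ (φ : ℂ → ℂ), AnalyticAt ℂ φ a ∧ φ a ≠ 0 ∧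
      ∀ᶠ z in 𝓝 a, g z = (z - a) ^ n • φ z := h.analyticOrderAt_eq_natCast

noncomputable def aord (g : ℂ → ℂ) (a : ℂ) : ℕ :=
  if h : AnalyticAt ℂ g a then h.order.toNat else 0

def ZS (g : ℂ → ℂ) : Set ℂ := {z : ℂ | z ∈ closedBall (0:ℂ) 1 ∧ g z = 0}

noncomputable def NN (g : ℂ → ℂ) : ℕ :=
  if h : (ZS g).Finite then h.toFinset.sum (aord g) else 0

lemma aord_eq {g : ℂ → ℂ} {a : ℂ} (h : AnalyticAt ℂ g a) : aord g a = h.order.toNat := by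
  simp only [aord, dif_pos h]

lemma mem_ballR {R : ℝ} (hR : 1 < R) {a : ℂ} (ha : a ∈ closedBall (0:ℂ) 1) :
    a ∈ ball (0:ℂ) R := by
  rw [mem_ball_zero_iff]
  rw [mem_closedBall_zero_iff] at ha
  linarith

lemma one_mem_ballR {R : ℝ} (hR : 1 < R) : (1:ℂ) ∈ ball (0:ℂ) R := by
  rw [mem_ball_zero_iff, norm_one]; exact hR

lemma analyticAt_of_ball {R : ℝ} {g : ℂ → ℂ} (hg : DifferentiableOn ℂ g (ball 0 R))
    {a : ℂ} (ha : a ∈ ball (0:ℂ) R) : AnalyticAt ℂ g a :=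
  hg.analyticAt (isOpen_ball.mem_nhds ha)

/-- Identity theorem: if zeros accumulate at a point of the ball then `g ≡ 0`. -/
lemma eqZero_of_freq {R : ℝ} {g : ℂ → ℂ} (hg : DifferentiableOn ℂ g (ball 0 R))
    {b : ℂ} (hb : b ∈ ball (0:ℂ) R) (hfreq : ∃ᶠ z in 𝓝[≠] b, g z = 0) :
    ∀ z ∈ ball (0:ℂ) R, g z = 0 := by
  have hA : AnalyticOnNhd ℂ g (ball 0 R) := hg.analyticOnNhd isOpen_ball
  have := hA.eqOn_zero_of_preconnected_of_frequently_eq_zero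
    (convex_ball (0:ℂ) R).isPreconnected hb hfreq
  exact fun z hz => this hz

lemma order_finite {R : ℝ} (hR : 1 < R) {g : ℂ → ℂ}
    (hg : DifferentiableOn ℂ g (ball 0 R)) (hne : g 1 ≠ 0)
    {b : ℂ} (hb : b ∈ ball (0:ℂ) R) (hA : AnalyticAt ℂ g b) :
    ∃ m : ℕ, hA.order = (m : ℕ∞) := by
  refine ⟨hA.order.toNat, (ENat.coe_toNat ?_).symm⟩
  intro htop
  rw [hA.order_eq_top_iff] at htop
  have hfreq : ∃ᶠ z in 𝓝[≠] b, g z = 0 :=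
    (htop.filter_mono nhdsWithin_le_nhds).frequently
  exact hne (eqZero_of_freq hg hb hfreq (1:ℂ) (one_mem_ballR hR))

lemma finite_zeros {R : ℝ} (hR : 1 < R) {g : ℂ → ℂ}
    (hg : DifferentiableOn ℂ g (ball 0 R)) (hne : g 1 ≠ 0) : (ZS g).Finite := by
  by_contra hinf
  rw [← Set.not_infinite, not_not] at hinf
  obtain ⟨x, hxK, hacc⟩ := hinf.exists_accPt_of_subset_isCompact
    (isCompact_closedBall (0:ℂ) 1) (fun z hz => hz.1)
  have hfreq : ∃ᶠ z in 𝓝[≠] x, g z = 0 := by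
    have : ∃ᶠ z in 𝓝[≠] x, z ∈ ZS g := by
      rw [Filter.frequently_iff_neBot]
      exact hacc
    exact this.mono fun z hz => hz.2
  exact hne (eqZero_of_freq hg (mem_ballR hR hxK) hfreq (1:ℂ) (one_mem_ballR hR))

lemma aord_pos {R : ℝ} {g : ℂ → ℂ} (hg : DifferentiableOn ℂ g (ball 0 R))
    {b : ℂ} (hb : b ∈ ball (0:ℂ) R) (hb0 : g b = 0) {m : ℕ}
    (hm : (analyticAt_of_ball hg hb).order = (m : ℕ∞)) : 1 ≤ m := by
  rcases Nat.eq_zero_or_pos m with h0 | h; swap; · exact h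
  subst h0
  obtain ⟨h, _, hh0, hev⟩ := ((analyticAt_of_ball hg hb).order_eq_nat_iff 0).mp hm
  have := hev.self_of_nhds
  simp only [pow_zero, one_smul] at this
  exact absurd (this ▸ hb0) hh0

/-- Nonvanishing case: `g` is constant on the closed ball. -/
lemma const_of_nonvanishing {R : ℝ} (hR : 1 < R) {c : ℝ} (hc : 0 < c) {g : ℂ → ℂ}
    (hg : DifferentiableOn ℂ g (ball 0 R))
    (hcirc : ∀ z : ℂ, ‖z‖ = 1 → ‖g z‖ = c)
    (h0 : ∀ a ∈ closedBall (0:ℂ) 1, g a ≠ 0) :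
    ∀ z ∈ closedBall (0:ℂ) 1, g z = g 0 := by
  have hsub : closedBall (0:ℂ) 1 ⊆ ball 0 R := closedBall_subset_ball hR
  have hcl : closure (ball (0:ℂ) 1) = closedBall (0:ℂ) 1 := closure_ball 0 one_ne_zero
  have hfr : frontier (ball (0:ℂ) 1) = sphere (0:ℂ) 1 := frontier_ball 0 one_ne_zero
  have habs : ∀ z ∈ sphere (0:ℂ) 1, ‖z‖ = 1 := by
    intro z hz
    rw [mem_sphere_iff_norm, sub_zero] at hz
    simpa using hz
  have hcont : ContinuousOn g (closedBall (0:ℂ) 1) := (hg.mono hsub).continuousOn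
  -- upper bound
  have hball : ball (0:ℂ) 1 ⊆ ball (0:ℂ) R := ball_subset_ball hR.le
  have hub : ∀ z ∈ closedBall (0:ℂ) 1, ‖g z‖ ≤ c := by
    intro z hz
    refine Complex.norm_le_of_forall_mem_frontier_norm_le (f := g) (U := ball (0:ℂ) 1)
      isBounded_ball ⟨hg.mono hball, ?_⟩ ?_ (by rw [hcl]; exact hz)
    · rw [hcl]; exact hcont
    · intro w hw
      rw [hfr] at hw
      rw [hcirc w (habs w hw)]
  -- lower bound via 1/g
  have hlb : ∀ z ∈ closedBall (0:ℂ) 1, c ≤ ‖g z‖ := by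
    intro z hz
    have hinv : ‖(g z)⁻¹‖ ≤ c⁻¹ := by
      refine Complex.norm_le_of_forall_mem_frontier_norm_le
        (f := fun w => (g w)⁻¹) (U := ball (0:ℂ) 1) isBounded_ball
        ⟨?_, ?_⟩ ?_ (by rw [hcl]; exact hz)
      · exact ((hg.mono hball).inv
          (fun w hw => h0 w (ball_subset_closedBall hw)))
      · rw [hcl]; exact hcont.inv₀ h0
      · intro w hw
        rw [hfr] at hw
        rw [norm_inv, hcirc w (habs w hw)]
    have hgz : g z ≠ 0 := h0 z hz
    have h1 : 0 < ‖g z‖ := norm_pos_iff.mpr hgz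
    rw [norm_inv] at hinv
    calc c = (c⁻¹)⁻¹ := by rw [inv_inv]
    _ ≤ (‖g z‖⁻¹)⁻¹ := by
        apply inv_anti₀ (by positivity) hinv
    _ = ‖g z‖ := by rw [inv_inv]
  have heq : ∀ z ∈ closedBall (0:ℂ) 1, ‖g z‖ = c := fun z hz =>
    le_antisymm (hub z hz) (hlb z hz)
  have hmax : IsMaxOn (norm ∘ g) (ball (0:ℂ) 1) 0 := by
    intro z hz
    simp only [Function.comp_apply, Set.mem_setOf_eq]
    rw [heq z (ball_subset_closedBall hz),
      heq 0 (mem_closedBall_self zero_le_one)]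
  have hconst := Complex.eqOn_of_isPreconnected_of_isMaxOn_norm
    (convex_ball (0:ℂ) 1).isPreconnected isOpen_ball (hg.mono hball)
    (mem_ball_self one_pos) hmax
  have hext : Set.EqOn g (Function.const ℂ (g 0)) (closedBall (0:ℂ) 1) := by
    refine hconst.of_subset_closure ?_ continuousOn_const ball_subset_closedBall ?_
    · exact hcont
    · rw [hcl]
  exact fun z hz => hext hz

/-- Division by a Blaschke factor at a zero `a` of `g`. -/
lemma step {R : ℝ} (hR : 1 < R) {c : ℝ} (hc : 0 < c) {g : ℂ → ℂ}
    (hg : DifferentiableOn ℂ g (ball 0 R))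
    (hcirc : ∀ z : ℂ, ‖z‖ = 1 → ‖g z‖ = c)
    {a : ℂ} (ha : a ∈ closedBall (0:ℂ) 1) (hga : g a = 0) :
    ∃ g₁ : ℂ → ℂ, DifferentiableOn ℂ g₁ (ball 0 R) ∧
      (∀ z : ℂ, ‖z‖ = 1 → ‖g₁ z‖ = c) ∧
      NN g₁ + 1 ≤ NN g ∧
      (∀ z : ℂ, (z - a) * g₁ z = (1 - (starRingEnd ℂ) a * z) * g z) := by
  have hne1 : g 1 ≠ 0 := by
    intro h
    have := hcirc 1 (by simp)
    rw [h, norm_zero] at this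
    exact hc.ne this
  have haR : a ∈ ball (0:ℂ) R := mem_ballR hR ha
  have haballR : ball (0:ℂ) R ∈ 𝓝 a := isOpen_ball.mem_nhds haR
  -- |a| < 1
  have halt : ‖a‖ < 1 := by
    rcases lt_or_eq_of_le (mem_closedBall_zero_iff.mp ha : ‖a‖ ≤ 1) with h | h
    · exact h
    · exfalso
      have := hcirc a h
      rw [hga, norm_zero] at this
      exact hc.ne this
  -- denominators are nonzero on the closed ball
  have hden : ∀ z : ℂ, ‖z‖ ≤ 1 → 1 - (starRingEnd ℂ) a * z ≠ 0 := by
    intro z hz h0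
    have h1 : (starRingEnd ℂ) a * z = 1 := by linear_combination -h0
    have := congrArg norm h1
    rw [norm_mul, norm_one, Complex.norm_conj] at this
    nlinarith [norm_nonneg z, norm_nonneg a]
  set g₁ : ℂ → ℂ := fun z => (1 - (starRingEnd ℂ) a * z) * dslope g a z with hg₁def
  have hds : DifferentiableOn ℂ (dslope g a) (ball 0 R) :=
    (Complex.differentiableOn_dslope haballR).mpr hg
  have hg₁ : DifferentiableOn ℂ g₁ (ball 0 R) := by
    apply DifferentiableOn.mul _ hds
    exact (differentiable_const _ |>.sub ((differentiable_const _).mul differentiable_id)).differentiableOn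
  -- the fundamental relation E
  have E : ∀ z : ℂ, (z - a) * g₁ z = (1 - (starRingEnd ℂ) a * z) * g z := by
    intro z
    have h1 := sub_smul_dslope g a z
    rw [smul_eq_mul, hga, sub_zero] at h1
    calc (z - a) * g₁ z = (1 - (starRingEnd ℂ) a * z) * ((z - a) * dslope g a z) := by
          rw [hg₁def]; ring
    _ = (1 - (starRingEnd ℂ) a * z) * g z := by rw [h1]
  -- circle modulus
  have hcirc1 : ∀ z : ℂ, ‖z‖ = 1 → ‖g₁ z‖ = c := by
    intro z hz
    have hza : z ≠ a := by
      intro h; rw [h] at hz; exact absurd hz halt.ne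
    have hkey : z * (starRingEnd ℂ) (z - a) = 1 - (starRingEnd ℂ) a * z := by
      rw [map_sub]
      have h1 : z * (starRingEnd ℂ) z = ((Complex.normSq z : ℝ) : ℂ) := Complex.mul_conj z
      have h2 : Complex.normSq z = 1 := by
        rw [Complex.normSq_eq_norm_sq, hz]; norm_num
      rw [mul_sub, h1, h2]
      push_cast
      ring
    have habs2 : ‖1 - (starRingEnd ℂ) a * z‖ = ‖z - a‖ := by
      rw [← hkey, norm_mul, Complex.norm_conj, hz, one_mul]
    have hzsub : z - a ≠ 0 := sub_ne_zero.mpr hza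
    have hgz : g₁ z = (1 - (starRingEnd ℂ) a * z) * g z / (z - a) := by
      rw [eq_div_iff hzsub]
      linear_combination E z
    have hA0 : ‖z - a‖ ≠ 0 := norm_ne_zero_iff.mpr hzsub
    rw [hgz, norm_div, norm_mul, habs2, hcirc z hz, mul_comm, mul_div_assoc,
      div_self hA0, mul_one]
  -- order bookkeeping
  have hfin : (ZS g).Finite := finite_zeros hR hg hne1
  have hsubZ : ZS g₁ ⊆ ZS g := by
    rintro b ⟨hb, hb0⟩
    refine ⟨hb, ?_⟩
    have hE := E b
    rw [hb0, mul_zero] at hE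
    have := hden b (mem_closedBall_zero_iff.mp hb)
    field_simp at hE
    exact (mul_eq_zero.mp hE.symm).resolve_left this
  have hfin1 : (ZS g₁).Finite := hfin.subset hsubZ
  have hA : AnalyticAt ℂ g a := analyticAt_of_ball hg haR
  obtain ⟨m, hm⟩ := order_finite hR hg hne1 haR hA
  have hm1 : 1 ≤ m := aord_pos hg haR hga (by
    have : analyticAt_of_ball hg haR = hA := rfl
    rw [this]; exact hm)
  obtain ⟨h, hh, hh0, hev⟩ := (hA.order_eq_nat_iff m).mp hm
  simp only [smul_eq_mul] at hev
  -- derivative of g at a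
  have hderiv : deriv g a = (m : ℂ) * (0:ℂ) ^ (m - 1) * h a := by
    have hF : HasDerivAt (fun z => (z - a) ^ m * h z)
        (((m : ℂ) * (a - a) ^ (m - 1) * 1) * h a + (a - a) ^ m * deriv h a) a := by
      exact (((hasDerivAt_id a).sub_const a).pow m).mul hh.differentiableAt.hasDerivAt
    have heq : deriv g a = deriv (fun z => (z - a) ^ m * h z) a :=
      Filter.EventuallyEq.deriv_eq hev
    rw [heq, hF.deriv, sub_self]
    have : (0:ℂ) ^ m = 0 := zero_pow (by omega)
    rw [this]
    ring
  -- order of g₁ at a is m - 1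
  have hev1 : ∀ᶠ z in 𝓝 a, g₁ z = (z - a) ^ (m - 1) *
      ((1 - (starRingEnd ℂ) a * z) * h z) := by
    have hpow0 : (m : ℂ) * (0:ℂ) ^ (m - 1) = (0:ℂ) ^ (m - 1) := by
      rcases m with _ | m
      · omega
      · rcases m with _ | m
        · norm_num
        · simp [zero_pow]
    filter_upwards [hev] with z hz
    by_cases hza : z = a
    · rw [hza, hg₁def]
      simp only [dslope_same, sub_self]
      rw [hderiv]
      calc (1 - (starRingEnd ℂ) a * a) * ((m : ℂ) * (0:ℂ) ^ (m-1) * h a)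
          = ((m : ℂ) * (0:ℂ) ^ (m-1)) * ((1 - (starRingEnd ℂ) a * a) * h a) := by ring
      _ = (0:ℂ) ^ (m-1) * ((1 - (starRingEnd ℂ) a * a) * h a) := by rw [hpow0]
    · have hdsl : dslope g a z = (z - a)⁻¹ * g z := by
        rw [dslope_of_ne g hza, slope_def_field, hga, sub_zero, div_eq_inv_mul]
      have hzsub : z - a ≠ 0 := sub_ne_zero.mpr hza
      rw [hg₁def]
      simp only []
      rw [hdsl, hz]
      have hpow : (z - a) ^ m = (z - a) * (z - a) ^ (m - 1) := by
        conv_lhs => rw [show m = (m - 1) + 1 by omega]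
        rw [pow_succ]
        ring
      rw [hpow]
      field_simp
  have hA1 : AnalyticAt ℂ g₁ a := analyticAt_of_ball hg₁ haR
  have hm1' : hA1.order = ((m - 1 : ℕ) : ℕ∞) := by
    rw [hA1.order_eq_nat_iff]
    refine ⟨fun z => (1 - (starRingEnd ℂ) a * z) * h z, ?_, ?_, ?_⟩
    · exact ((analyticAt_const).sub ((analyticAt_const).mul (analyticAt_id))).mul hh
    · exact mul_ne_zero (hden a (mem_closedBall_zero_iff.mp ha)) hh0
    · simpa [smul_eq_mul] using hev1
  -- orders away from a are unchanged
  have hord_eq : ∀ b ∈ closedBall (0:ℂ) 1, b ≠ a → aord g₁ b = aord g b := by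
    intro b hb hba
    have hbR : b ∈ ball (0:ℂ) R := mem_ballR hR hb
    have hAb : AnalyticAt ℂ g b := analyticAt_of_ball hg hbR
    have hAb1 : AnalyticAt ℂ g₁ b := analyticAt_of_ball hg₁ hbR
    obtain ⟨mb, hmb⟩ := order_finite hR hg hne1 hbR hAb
    obtain ⟨hb', hhb, hhb0, hevb⟩ := (hAb.order_eq_nat_iff mb).mp hmb
    simp only [smul_eq_mul] at hevb
    have hbsub : b - a ≠ 0 := sub_ne_zero.mpr hba
    have hevb1 : ∀ᶠ z in 𝓝 b, g₁ z = (z - b) ^ mb *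
        ((1 - (starRingEnd ℂ) a * z) * hb' z * (z - a)⁻¹) := by
      filter_upwards [hevb, eventually_ne_nhds hba] with z hz hza
      have hzsub : z - a ≠ 0 := sub_ne_zero.mpr hza
      have hE := E z
      have : g₁ z = (1 - (starRingEnd ℂ) a * z) * g z * (z - a)⁻¹ := by
        field_simp at hE ⊢
        linear_combination hE
      rw [this, hz]
      ring
    have hmb1 : hAb1.order = ((mb : ℕ) : ℕ∞) := by
      rw [hAb1.order_eq_nat_iff]
      refine ⟨fun z => (1 - (starRingEnd ℂ) a * z) * hb' z * (z - a)⁻¹, ?_, ?_, ?_⟩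
      · exact (((analyticAt_const).sub ((analyticAt_const).mul (analyticAt_id))).mul hhb).mul
          (((analyticAt_id).sub analyticAt_const).inv hbsub)
      · exact mul_ne_zero (mul_ne_zero (hden b (mem_closedBall_zero_iff.mp hb)) hhb0)
          (inv_ne_zero hbsub)
      · simpa [smul_eq_mul] using hevb1
    rw [aord_eq hAb1, aord_eq hAb, hmb1, hmb]
  -- sum bookkeeping
  refine ⟨g₁, hg₁, hcirc1, ?_, E⟩
  have haF : a ∈ hfin.toFinset := by rw [Set.Finite.mem_toFinset]; exact ⟨ha, hga⟩
  have hNNg : NN g = aord g a + ∑ b ∈ hfin.toFinset.erase a, aord g b := by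
    rw [NN, dif_pos hfin, ← Finset.add_sum_erase _ _ haF]
  have hNN1 : NN g₁ ≤ aord g₁ a + ∑ b ∈ hfin.toFinset.erase a, aord g₁ b := by
    rw [NN, dif_pos hfin1, Finset.add_sum_erase _ (aord g₁) haF]
    exact Finset.sum_le_sum_of_subset (Set.Finite.toFinset_subset_toFinset.mpr hsubZ)
  have hsum_eq : ∑ b ∈ hfin.toFinset.erase a, aord g₁ b =
      ∑ b ∈ hfin.toFinset.erase a, aord g b := by
    apply Finset.sum_congr rfl
    intro b hb
    have hba : b ≠ a := Finset.ne_of_mem_erase hb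
    have hbZ : b ∈ ZS g := by
      have := Finset.mem_of_mem_erase hb
      rwa [Set.Finite.mem_toFinset] at this
    exact hord_eq b hbZ.1 hba
  have haord : aord g a = m := by rw [aord_eq hA, hm, ENat.toNat_coe]
  have haord1 : aord g₁ a = m - 1 := by rw [aord_eq hA1, hm1', ENat.toNat_coe]
  rw [hNNg, haord]
  calc NN g₁ + 1 ≤ (aord g₁ a + ∑ b ∈ hfin.toFinset.erase a, aord g₁ b) + 1 := by omega
  _ = (m - 1) + (∑ b ∈ hfin.toFinset.erase a, aord g b) + 1 := by rw [haord1, hsum_eq]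
  _ = m + ∑ b ∈ hfin.toFinset.erase a, aord g b := by omega

lemma keyLemma {R : ℝ} (hR : 1 < R) {c : ℝ} (hc : 0 < c) :
    ∀ (k : ℕ) (g : ℂ → ℂ), DifferentiableOn ℂ g (ball 0 R) →
      (∀ z : ℂ, ‖z‖ = 1 → ‖g z‖ = c) → NN g ≤ k →
      ∃ P Q : Polynomial ℂ, (∀ z : ℂ, ‖z‖ ≤ 1 → Q.eval z ≠ 0) ∧
        ∀ z : ℂ, ‖z‖ ≤ 1 → g z = P.eval z / Q.eval z := by
  intro k
  induction k with
  | zero =>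
    intro g hg hcirc hNN
    by_cases h0 : ∀ a ∈ closedBall (0:ℂ) 1, g a ≠ 0
    · refine ⟨Polynomial.C (g 0), 1, fun z _ => by simp, fun z hz => ?_⟩
      rw [eval_one, div_one, eval_C]
      exact const_of_nonvanishing hR hc hg hcirc h0 z
        (mem_closedBall_zero_iff.mpr (by simpa using hz))
    · exfalso
      push_neg at h0
      obtain ⟨a, ha, hga⟩ := h0
      obtain ⟨g₁, _, _, hNN1, _⟩ := step hR hc hg hcirc ha hga
      omega
  | succ k ih =>
    intro g hg hcirc hNN
    by_cases h0 : ∀ a ∈ closedBall (0:ℂ) 1, g a ≠ 0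
    · refine ⟨Polynomial.C (g 0), 1, fun z _ => by simp, fun z hz => ?_⟩
      rw [eval_one, div_one, eval_C]
      exact const_of_nonvanishing hR hc hg hcirc h0 z
        (mem_closedBall_zero_iff.mpr (by simpa using hz))
    · push_neg at h0
      obtain ⟨a, ha, hga⟩ := h0
      obtain ⟨g₁, hg₁, hcirc1, hNN1, E⟩ := step hR hc hg hcirc ha hga
      obtain ⟨P₁, Q₁, hQ₁, hPQ⟩ := ih g₁ hg₁ hcirc1 (by omega)
      -- |a| < 1 and denominators nonzero
      have halt : ‖a‖ < 1 := by
        rcases lt_or_eq_of_le (mem_closedBall_zero_iff.mp ha : ‖a‖ ≤ 1) with h | h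
        · exact h
        · exfalso
          have := hcirc a h
          rw [hga, norm_zero] at this
          exact hc.ne this
      have hden : ∀ z : ℂ, ‖z‖ ≤ 1 → 1 - (starRingEnd ℂ) a * z ≠ 0 := by
        intro z hz h0'
        have h1 : (starRingEnd ℂ) a * z = 1 := by linear_combination -h0'
        have := congrArg norm h1
        rw [norm_mul, norm_one, Complex.norm_conj] at this
        nlinarith [norm_nonneg z, norm_nonneg a]
      refine ⟨P₁ * (X - Polynomial.C a),
        Q₁ * (1 - Polynomial.C ((starRingEnd ℂ) a) * X), ?_, ?_⟩
      · intro z hz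
        simp only [eval_mul, eval_sub, eval_one, eval_C, eval_X]
        exact mul_ne_zero (hQ₁ z hz) (hden z hz)
      · intro z hz
        simp only [eval_mul, eval_sub, eval_one, eval_C, eval_X]
        have h1 : g z = (z - a) * g₁ z / (1 - (starRingEnd ℂ) a * z) := by
          rw [eq_div_iff (hden z hz)]
          linear_combination -(E z)
        rw [h1, hPQ z hz]
        field_simp

lemma ball_subset_thickening_closedBall {δ : ℝ} (hδ : 0 < δ) :
    ball (0:ℂ) (1 + δ) ⊆ thickening δ (closedBall (0:ℂ) 1) := by
  intro z hz
  rw [mem_ball_zero_iff] at hz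
  rw [Metric.mem_thickening_iff]
  by_cases h1 : ‖z‖ ≤ 1
  · exact ⟨z, mem_closedBall_zero_iff.mpr h1, by simpa [dist_self] using hδ⟩
  · push_neg at h1
    have hzpos : (0:ℝ) < ‖z‖ := by linarith
    refine ⟨(‖z‖⁻¹ : ℝ) • z, ?_, ?_⟩
    · rw [mem_closedBall_zero_iff, norm_smul, Real.norm_eq_abs,
        abs_of_pos (inv_pos.mpr hzpos), inv_mul_cancel₀ hzpos.ne']
    · have heq : z - (‖z‖⁻¹ : ℝ) • z = ((1 - ‖z‖⁻¹ : ℝ)) • z := by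
        rw [sub_smul, one_smul]
      rw [dist_eq_norm, heq, norm_smul, Real.norm_eq_abs]
      have hinv : ‖z‖⁻¹ < 1 := inv_lt_one_of_one_lt₀ h1
      rw [_root_.abs_of_nonneg (by linarith : (0:ℝ) ≤ 1 - ‖z‖⁻¹)]
      have : (1 - ‖z‖⁻¹) * ‖z‖ = ‖z‖ - 1 := by
        rw [sub_mul, one_mul, inv_mul_cancel₀ hzpos.ne']
      rw [this]
      linarith

/-- If the error curve of a rational approximation is exactly circular, then `f` itself
is rational (on the closed unit disk). -/
theorem stmt7 (f : ℂ → ℂ)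
    (hf : ∃ U : Set ℂ, IsOpen U ∧ closedBall (0:ℂ) 1 ⊆ U ∧ DifferentiableOn ℂ f U)
    (n : ℕ) (r : ℂ → ℂ) (hr : IsRatDeg n r)
    (c : ℝ) (hc : 0 < c)
    (hcirc : ∀ z : ℂ, ‖z‖ = 1 → ‖r z - f z‖ = c) :
    ∃ P Q : Polynomial ℂ, (∀ z : ℂ, ‖z‖ ≤ 1 → Q.eval z ≠ 0) ∧
      ∀ z : ℂ, ‖z‖ ≤ 1 → f z = P.eval z / Q.eval z := by
  obtain ⟨U, hUopen, hUsub, hUdiff⟩ := hf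
  obtain ⟨p, q, -, -, hq, hrpq⟩ := hr
  -- shrink to a ball of radius R > 1
  have hqopen : IsOpen {z : ℂ | q.eval z ≠ 0} := by
    have : {z : ℂ | q.eval z ≠ 0} = (fun z => q.eval z) ⁻¹' ({0}ᶜ) := rfl
    rw [this]
    exact IsOpen.preimage q.continuous_aeval isOpen_compl_singleton
  set V : Set ℂ := U ∩ {z : ℂ | q.eval z ≠ 0} with hVdef
  have hVopen : IsOpen V := hUopen.inter hqopen
  have hVsub : closedBall (0:ℂ) 1 ⊆ V := by
    intro z hz
    exact ⟨hUsub hz, hq z (by simpa using mem_closedBall_zero_iff.mp hz)⟩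
  obtain ⟨δ, hδpos, hth⟩ := (isCompact_closedBall (0:ℂ) 1).exists_thickening_subset_open
    hVopen hVsub
  set R : ℝ := 1 + δ with hRdef
  have hR : 1 < R := by simp [hRdef, hδpos]
  have hballV : ball (0:ℂ) R ⊆ V :=
    (ball_subset_thickening_closedBall hδpos).trans hth
  -- the error function
  set g : ℂ → ℂ := fun z => p.eval z / q.eval z - f z with hgdef
  have hgdiff : DifferentiableOn ℂ g (ball 0 R) := by
    apply DifferentiableOn.sub
    · apply DifferentiableOn.div
      · exact p.differentiable.differentiableOn
      · exact q.differentiable.differentiableOn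
      · exact fun z hz => (hballV hz).2
    · exact hUdiff.mono (fun z hz => (hballV hz).1)
  have hgcirc : ∀ z : ℂ, ‖z‖ = 1 → ‖g z‖ = c := by
    intro z hz
    have : g z = r z - f z := by
      rw [hgdef]
      simp only []
      rw [hrpq z hz.le]
    rw [this]
    exact hcirc z hz
  obtain ⟨P₀, Q₀, hQ₀, hg0⟩ := keyLemma hR hc (NN g) g hgdiff hgcirc le_rfl
  refine ⟨p * Q₀ - P₀ * q, q * Q₀, ?_, ?_⟩
  · intro z hz
    simp only [eval_mul]
    exact mul_ne_zero (hq z hz) (hQ₀ z hz)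
  · intro z hz
    have h1 := hg0 z hz
    have h2 : g z = p.eval z / q.eval z - f z := rfl
    rw [h2] at h1
    have hqz := hq z hz
    have hQ₀z := hQ₀ z hz
    simp only [eval_mul, eval_sub]
    field_simp at h1 ⊢
    linear_combination -h1
end

section
/- Let f(z) = z². Then the zero function is a best degree-1 L^∞ approximation to f on the unit circle: for every r ∈ R₁, sup_{|z|=1} |z² − r(z)| ≥ 1, and equality holds for r = 0, so inf_{r ∈ R₁} ‖f − r‖_∞ = 1. -/
open Complex Metric Polynomial

section AuxLemmas
open Real

lemma intExpZ (n : ℤ) (hn : n ≠ 0) :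
    (∫ θ : ℝ in (0:ℝ)..(2*π), Complex.exp ((n:ℂ) * θ * Complex.I)) = 0 := by
  have hc : (n:ℂ) * Complex.I ≠ 0 :=
    mul_ne_zero (by exact_mod_cast hn) Complex.I_ne_zero
  have h : ∀ θ : ℝ, (n:ℂ) * θ * Complex.I = ((n:ℂ) * Complex.I) * θ := fun θ => by ring
  simp_rw [h]
  rw [integral_exp_mul_complex hc]
  have h2 : (n:ℂ) * Complex.I * ((2*π : ℝ) : ℂ) = (n:ℤ) * (2*π*Complex.I) := by
    push_cast; ring
  rw [h2, Complex.exp_int_mul_two_pi_mul_I]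
  simp

lemma intX : (∫ θ : ℝ in (0:ℝ)..(2*π), Complex.exp (θ * Complex.I)) = 0 := by
  have := intExpZ 1 one_ne_zero
  simpa using this

lemma intY (k : ℕ) (hk : k ≠ 0) :
    (∫ θ : ℝ in (0:ℝ)..(2*π), (Complex.exp (-(θ * Complex.I)))^k) = 0 := by
  have h : ∀ θ : ℝ, (Complex.exp (-(θ * Complex.I)))^k
      = Complex.exp (((-(k:ℤ) : ℤ):ℂ) * θ * Complex.I) := by
    intro θ
    rw [← Complex.exp_nat_mul]
    congr 1; push_cast; ring
  simp_rw [h]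
  exact intExpZ (-(k:ℤ)) (by simpa using hk)

lemma lower_bound (r : ℂ → ℂ) (h : IsRatDeg 1 r) :
    1 ≤ LInfNorm (fun z => z ^ 2 - r z) := by
  obtain ⟨p, q, hp1, hq1, hq0, hrpq⟩ := h
  set M := LInfNorm (fun z => z ^ 2 - r z) with hM_def
  set a := q.coeff 0 with ha_def
  set b := q.coeff 1 with hb_def
  set c := p.coeff 0 with hc_def
  set d := p.coeff 1 with hd_def
  have hq_eval : ∀ z : ℂ, q.eval z = b * z + a := by
    intro z
    conv_lhs => rw [Polynomial.eq_X_add_C_of_natDegree_le_one hq1]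
    simp [ha_def, hb_def]
  have hp_eval : ∀ z : ℂ, p.eval z = d * z + c := by
    intro z
    conv_lhs => rw [Polynomial.eq_X_add_C_of_natDegree_le_one hp1]
    simp [hc_def, hd_def]
  have ha : a ≠ 0 := by
    have := hq0 0 (by simp)
    rwa [hq_eval, mul_zero, zero_add] at this
  -- M is an upper bound
  have hbdd : BddAbove {y : ℝ | ∃ z : ℂ, ‖z‖ = 1 ∧
      y = ‖(fun z => z ^ 2 - r z) z‖} := by
    have hSeq : {y : ℝ | ∃ z : ℂ, ‖z‖ = 1 ∧
        y = ‖(fun z => z ^ 2 - r z) z‖}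
        = (fun z => ‖z ^ 2 - p.eval z / q.eval z‖) '' (sphere (0:ℂ) 1) := by
      ext y
      simp only [Set.mem_setOf_eq, Set.mem_image, mem_sphere_zero_iff_norm]
      constructor
      · rintro ⟨z, hz, rfl⟩
        exact ⟨z, hz, by rw [hrpq z hz.le]⟩
      · rintro ⟨z, hz, rfl⟩
        exact ⟨z, hz, by rw [hrpq z hz.le]⟩
    rw [hSeq]
    apply IsCompact.bddAbove
    apply (isCompact_sphere (0:ℂ) 1).image_of_continuousOn
    apply continuous_norm.comp_continuousOn
    apply ContinuousOn.sub (continuous_pow 2).continuousOn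
    exact ContinuousOn.div p.continuous_aeval.continuousOn q.continuous_aeval.continuousOn
      (fun z hz => hq0 z (by simpa using hz.le))
  have hM : ∀ z : ℂ, ‖z‖ = 1 → ‖z ^ 2 - r z‖ ≤ M :=
    fun z hz => le_csSup hbdd ⟨z, hz, rfl⟩
  have hM0 : 0 ≤ M := le_trans (norm_nonneg _) (hM 1 (by simp))
  -- set up the integrand
  set x : ℝ → ℂ := fun θ => Complex.exp (θ * Complex.I) with hx_def
  set y : ℝ → ℂ := fun θ => Complex.exp (-(θ * Complex.I)) with hy_def
  have hxc : Continuous x := by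
    exact (Complex.continuous_ofReal.mul continuous_const).cexp
  have hyc : Continuous y := by
    exact ((Complex.continuous_ofReal.mul continuous_const).neg).cexp
  have hxne : ∀ θ : ℝ, x θ ≠ 0 := fun θ => Complex.exp_ne_zero _
  have hxy : ∀ θ : ℝ, x θ * y θ = 1 := by
    intro θ; rw [hx_def, hy_def]; dsimp only
    rw [← Complex.exp_add]; simp
  have hyinv : ∀ θ : ℝ, y θ = (x θ)⁻¹ := by
    intro θ; rw [hx_def, hy_def]; dsimp only; rw [Complex.exp_neg]
  have habsx : ∀ θ : ℝ, ‖x θ‖ = 1 := fun θ => Complex.norm_exp_ofReal_mul_I θ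
  have habsy : ∀ θ : ℝ, ‖y θ‖ = 1 := by
    intro θ; rw [hyinv, norm_inv, habsx]; norm_num
  set f : ℝ → ℂ := fun θ =>
    ((x θ)^2 * (b * x θ + a) - (d * x θ + c)) *
      ((starRingEnd ℂ) b + (starRingEnd ℂ) a * x θ) * (y θ)^3 with hf_def
  have hfc : Continuous f := by
    apply Continuous.mul
    apply Continuous.mul
    · exact (((hxc.pow 2).mul ((continuous_const.mul hxc).add continuous_const)).sub
        ((continuous_const.mul hxc).add continuous_const))
    · exact continuous_const.add (continuous_const.mul hxc)
    · exact hyc.pow 3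
  -- pointwise expansion of f
  have hfid : ∀ θ : ℝ, f θ = (((Complex.normSq a + Complex.normSq b : ℝ)):ℂ)
      + (a * (starRingEnd ℂ) b - d * (starRingEnd ℂ) a) * y θ
      + (starRingEnd ℂ) a * b * x θ
      - c * (starRingEnd ℂ) b * (y θ)^3
      - (c * (starRingEnd ℂ) a + d * (starRingEnd ℂ) b) * (y θ)^2 := by
    intro θ
    have h1 : ((Complex.normSq a : ℝ) : ℂ) = a * (starRingEnd ℂ) a := (Complex.mul_conj a).symm
    have h2 : ((Complex.normSq b : ℝ) : ℂ) = b * (starRingEnd ℂ) b := (Complex.mul_conj b).symm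
    rw [hf_def]; dsimp only
    rw [hyinv θ]
    push_cast [h1, h2]
    field_simp [hxne θ]
    ring
  -- integral of f
  have hY1 : (∫ θ : ℝ in (0:ℝ)..(2*π), y θ) = 0 := by
    have := intY 1 one_ne_zero; simpa [hy_def] using this
  have hY2 : (∫ θ : ℝ in (0:ℝ)..(2*π), (y θ)^2) = 0 := intY 2 (by norm_num)
  have hY3 : (∫ θ : ℝ in (0:ℝ)..(2*π), (y θ)^3) = 0 := intY 3 (by norm_num)
  have hX : (∫ θ : ℝ in (0:ℝ)..(2*π), x θ) = 0 := intX
  have hInt : ∀ u : ℝ → ℂ, Continuous u →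
      IntervalIntegrable u MeasureTheory.volume 0 (2*π) := fun u hu =>
    hu.intervalIntegrable _ _
  have hintf : (∫ θ : ℝ in (0:ℝ)..(2*π), f θ)
      = ((2*π*(Complex.normSq a + Complex.normSq b) : ℝ) : ℂ) := by
    have : (∫ θ : ℝ in (0:ℝ)..(2*π), f θ)
        = ∫ θ : ℝ in (0:ℝ)..(2*π), ((((Complex.normSq a + Complex.normSq b : ℝ)):ℂ)
          + (a * (starRingEnd ℂ) b - d * (starRingEnd ℂ) a) * y θ
          + (starRingEnd ℂ) a * b * x θ
          - c * (starRingEnd ℂ) b * (y θ)^3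
          - (c * (starRingEnd ℂ) a + d * (starRingEnd ℂ) b) * (y θ)^2) := by
      exact intervalIntegral.integral_congr (fun θ _ => hfid θ)
    rw [this]
    rw [intervalIntegral.integral_sub, intervalIntegral.integral_sub,
        intervalIntegral.integral_add, intervalIntegral.integral_add,
        intervalIntegral.integral_const_mul, intervalIntegral.integral_const_mul,
        intervalIntegral.integral_const_mul, intervalIntegral.integral_const_mul,
        intervalIntegral.integral_const, hY1, hY2, hY3, hX]
    · push_cast; simp [smul_eq_mul]; ring
    all_goals apply hInt _ (by fun_prop)
  -- pointwise norm computation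
  have hqx : ∀ θ : ℝ, b * x θ + a ≠ 0 := fun θ => by
    rw [← hq_eval]; exact hq0 _ (habsx θ).le
  have hrx : ∀ θ : ℝ, r (x θ) = (d * x θ + c) / (b * x θ + a) := fun θ => by
    rw [hrpq _ (habsx θ).le, hp_eval, hq_eval]
  have hfact : ∀ θ : ℝ, (x θ)^2 * (b * x θ + a) - (d * x θ + c)
      = (b * x θ + a) * ((x θ)^2 - r (x θ)) := by
    intro θ; rw [hrx θ, mul_sub, mul_div_cancel₀ _ (hqx θ)]; ring
  have hcx : ∀ θ : ℝ, (starRingEnd ℂ) (x θ) = y θ := by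
    intro θ
    rw [hx_def, hy_def]; dsimp only
    rw [← Complex.exp_conj]
    congr 1
    simp
  have hcy : ∀ θ : ℝ, (starRingEnd ℂ) (y θ) = x θ := by
    intro θ
    rw [hy_def, hx_def]; dsimp only
    rw [← Complex.exp_conj]
    congr 1
    simp
  have habs_conjfac : ∀ θ : ℝ, ‖(starRingEnd ℂ) b + (starRingEnd ℂ) a * x θ‖
      = ‖b * x θ + a‖ := by
    intro θ
    have h1 : (starRingEnd ℂ) b + (starRingEnd ℂ) a * x θ
        = (starRingEnd ℂ) (b + a * y θ) := by
      rw [map_add, map_mul, hcy θ]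
    rw [h1, Complex.norm_conj]
    have h2 : b + a * y θ = y θ * (b * x θ + a) := by
      linear_combination (-b) * hxy θ
    rw [h2, norm_mul, habsy, one_mul]
  have hnorm : ∀ θ : ℝ, ‖f θ‖
      = ‖(x θ)^2 - r (x θ)‖ * Complex.normSq (b * x θ + a) := by
    intro θ
    rw [hf_def]; dsimp only
    rw [norm_mul, norm_mul, hfact θ, norm_mul, habs_conjfac θ,
      norm_pow, habsy]
    rw [← Complex.sq_norm]
    ring
  have hnorm_le : ∀ θ : ℝ, ‖f θ‖ ≤ M * Complex.normSq (b * x θ + a) := by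
    intro θ; rw [hnorm θ]
    exact mul_le_mul_of_nonneg_right (hM _ (habsx θ)) (Complex.normSq_nonneg _)
  -- the weight integral
  have hJ : (∫ θ : ℝ in (0:ℝ)..(2*π), Complex.normSq (b * x θ + a))
      = 2*π*(Complex.normSq a + Complex.normSq b) := by
    have h1 : ∀ θ : ℝ, ((Complex.normSq (b * x θ + a) : ℝ) : ℂ)
        = (((Complex.normSq a + Complex.normSq b : ℝ)):ℂ)
          + b * (starRingEnd ℂ) a * x θ + a * (starRingEnd ℂ) b * y θ := by
      intro θ
      rw [← Complex.mul_conj, map_add, map_mul, hcx θ]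
      have h1a : ((Complex.normSq a : ℝ) : ℂ) = a * (starRingEnd ℂ) a :=
        (Complex.mul_conj a).symm
      have h1b : ((Complex.normSq b : ℝ) : ℂ) = b * (starRingEnd ℂ) b :=
        (Complex.mul_conj b).symm
      push_cast [h1a, h1b]
      linear_combination (b * (starRingEnd ℂ) b) * hxy θ
    apply Complex.ofReal_injective
    rw [← intervalIntegral.integral_ofReal]
    calc (∫ θ : ℝ in (0:ℝ)..(2*π), ((Complex.normSq (b * x θ + a) : ℝ) : ℂ))
        = ∫ θ : ℝ in (0:ℝ)..(2*π), ((((Complex.normSq a + Complex.normSq b : ℝ)):ℂ)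
            + b * (starRingEnd ℂ) a * x θ + a * (starRingEnd ℂ) b * y θ) :=
          intervalIntegral.integral_congr (fun θ _ => h1 θ)
      _ = ((2*π*(Complex.normSq a + Complex.normSq b) : ℝ) : ℂ) := by
          rw [intervalIntegral.integral_add, intervalIntegral.integral_add,
            intervalIntegral.integral_const_mul, intervalIntegral.integral_const_mul,
            intervalIntegral.integral_const, hX, hY1]
          · push_cast; simp [smul_eq_mul]; ring
          all_goals apply hInt _ (by fun_prop)
  -- the final chain
  have hπ : (0:ℝ) ≤ 2*π := by positivity
  have e1 : ‖∫ θ : ℝ in (0:ℝ)..(2*π), f θ‖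
      = 2*π*(Complex.normSq a + Complex.normSq b) := by
    rw [hintf, Complex.norm_real, Real.norm_eq_abs, _root_.abs_of_nonneg]
    nlinarith [Complex.normSq_nonneg a, Complex.normSq_nonneg b, Real.pi_pos]
  have key : 2*π*(Complex.normSq a + Complex.normSq b)
      ≤ M * (2*π*(Complex.normSq a + Complex.normSq b)) := by
    calc 2*π*(Complex.normSq a + Complex.normSq b)
        = ‖∫ θ : ℝ in (0:ℝ)..(2*π), f θ‖ := e1.symm
      _ ≤ ∫ θ : ℝ in (0:ℝ)..(2*π), ‖f θ‖ :=
          intervalIntegral.norm_integral_le_integral_norm hπ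
      _ ≤ ∫ θ : ℝ in (0:ℝ)..(2*π), M * Complex.normSq (b * x θ + a) := by
          apply intervalIntegral.integral_mono_on hπ
          · exact hfc.norm.intervalIntegrable _ _
          · exact (continuous_const.mul
              (Complex.continuous_normSq.comp
                ((continuous_const.mul hxc).add continuous_const))).intervalIntegrable _ _
          · exact fun θ _ => hnorm_le θ
      _ = M * (2*π*(Complex.normSq a + Complex.normSq b)) := by
          rw [intervalIntegral.integral_const_mul, hJ]
  have hpos : 0 < 2*π*(Complex.normSq a + Complex.normSq b) := by
    have h1 : 0 < Complex.normSq a := Complex.normSq_pos.mpr ha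
    have h2 := Complex.normSq_nonneg b
    have h3 := Real.pi_pos
    nlinarith
  nlinarith [key, hpos]


/-- The zero function is a best degree-1 L^∞ approximation to `f(z) = z²` on the unit
circle, and the optimal error is `1`. -/
theorem stmt9 :
    (∀ r : ℂ → ℂ, IsRatDeg 1 r → 1 ≤ LInfNorm (fun z => z ^ 2 - r z)) ∧
    IsRatDeg 1 (fun _ : ℂ => (0:ℂ)) ∧
    LInfNorm (fun z : ℂ => z ^ 2 - 0) = 1 ∧
    sInf {y : ℝ | ∃ r : ℂ → ℂ, IsRatDeg 1 r ∧ y = LInfNorm (fun z => z ^ 2 - r z)} = 1 := by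
  have h1 : ∀ r : ℂ → ℂ, IsRatDeg 1 r → 1 ≤ LInfNorm (fun z => z ^ 2 - r z) :=
    lower_bound
  have h2 : IsRatDeg 1 (fun _ : ℂ => (0:ℂ)) := by
    refine ⟨0, 1, by simp, by simp, fun z _ => by simp, fun z _ => by simp⟩
  have h3 : LInfNorm (fun z : ℂ => z ^ 2 - 0) = 1 := by
    have hset : {y : ℝ | ∃ z : ℂ, ‖z‖ = 1 ∧
        y = ‖(fun z : ℂ => z ^ 2 - 0) z‖} = {1} := by
      ext u
      simp only [Set.mem_setOf_eq, Set.mem_singleton_iff]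
      constructor
      · rintro ⟨z, hz, rfl⟩
        simp [map_pow, hz]
      · rintro rfl
        exact ⟨1, by simp, by simp⟩
    rw [LInfNorm, hset, csSup_singleton]
  refine ⟨h1, h2, h3, ?_⟩
  have hmem : (1:ℝ) ∈ {y : ℝ | ∃ r : ℂ → ℂ, IsRatDeg 1 r ∧
      y = LInfNorm (fun z => z ^ 2 - r z)} := by
    exact ⟨fun _ => 0, h2, h3.symm⟩
  have hlb : ∀ y ∈ {y : ℝ | ∃ r : ℂ → ℂ, IsRatDeg 1 r ∧
      y = LInfNorm (fun z => z ^ 2 - r z)}, (1:ℝ) ≤ y := by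
    rintro u ⟨r, hr, rfl⟩
    exact h1 r hr
  exact le_antisymm (csInf_le ⟨1, hlb⟩ hmem) (le_csInf ⟨1, hmem⟩ hlb)
end AuxLemmas
end

section
/- Let f(z) = z². For each real θ, define r_θ(z) = (z e^{iθ}/2) / (z e^{−iθ} − √2 i). Then r_θ ∈ R₁, ‖f − r_θ‖₂ = √3/2, and r_θ is a best degree-1 L² approximation to f: for every r ∈ R₁, ‖f − r‖₂ ≥ √3/2. In particular inf_{r ∈ R₁} ‖f − r‖₂ = √3/2, and the best L² approximation is nonunique. -/
open Complex Metric Polynomial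

namespace Stmt10Aux

open intervalIntegral MeasureTheory Set

noncomputable def ee (θ : ℝ) : ℂ := Complex.exp (θ * Complex.I)

lemma cont_ee : Continuous ee :=
  Complex.continuous_exp.comp (Complex.continuous_ofReal.mul continuous_const)

lemma ee_ne (θ : ℝ) : ee θ ≠ 0 := Complex.exp_ne_zero _

lemma abs_ee (θ : ℝ) : ‖ee θ‖ = 1 := Complex.norm_exp_ofReal_mul_I θ

lemma ee_mem (θ : ℝ) : ee θ ∈ sphere (0:ℂ) 1 := by
  rw [mem_sphere_zero_iff_norm, abs_ee]

lemma conj_ee (θ : ℝ) : (starRingEnd ℂ) (ee θ) = (ee θ)⁻¹ := by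
  rw [ee, ← Complex.exp_conj, ← Complex.exp_neg]
  congr 1
  simp [Complex.conj_ofReal]

lemma exp_neg_eq (θ : ℝ) : Complex.exp (-(θ:ℂ) * Complex.I) = (ee θ)⁻¹ := by
  rw [ee, ← Complex.exp_neg]
  congr 1
  ring

lemma sub_ne_of_abs_ne {x y : ℂ} (h : ‖x‖ ≠ ‖y‖) : x - y ≠ 0 := by
  intro h0
  rw [sub_eq_zero] at h0
  exact h (by rw [h0])

lemma sphere_abs {z : ℂ} (hz : z ∈ sphere (0:ℂ) 1) : ‖z‖ = 1 := by
  rw [mem_sphere_zero_iff_norm] at hz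
  simpa using hz

lemma sphere_ne_zero {z : ℂ} (hz : z ∈ sphere (0:ℂ) 1) : z ≠ 0 := by
  intro h
  have := sphere_abs hz
  rw [h] at this
  simp at this

lemma ii {F : ℝ → ℂ} (h : Continuous F) :
    IntervalIntegrable F volume 0 (2*Real.pi) := h.intervalIntegrable _ _

lemma iiR {F : ℝ → ℝ} (h : Continuous F) :
    IntervalIntegrable F volume 0 (2*Real.pi) := h.intervalIntegrable _ _

/-- basic conversion between interval integrals over `[0,2π]` and circle integrals -/
lemma int_eq_circ (G : ℂ → ℂ) :
    (∫ θ in (0:ℝ)..(2*Real.pi), G (ee θ)) = -I * ∮ z in C(0, 1), z⁻¹ * G z := by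
  have h : ∀ θ : ℝ, deriv (circleMap 0 1) θ • ((circleMap 0 1 θ)⁻¹ * G (circleMap 0 1 θ))
      = I * G (ee θ) := by
    intro θ
    have h1 : circleMap 0 1 θ = ee θ := by simp [circleMap, ee]
    rw [deriv_circleMap, h1, smul_eq_mul]
    have h2 := ee_ne θ
    field_simp
  rw [circleIntegral]
  simp only [h]
  rw [intervalIntegral.integral_const_mul, ← mul_assoc, neg_mul, Complex.I_mul_I, neg_neg, one_mul]

lemma neg_I_mul (x : ℂ) : -I * (2 * (Real.pi:ℂ) * I * x) = 2 * (Real.pi:ℂ) * x := by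
  linear_combination (-(2*(Real.pi:ℂ))*x) * Complex.I_mul_I

/-- Cauchy integral formula specialized -/
lemma cif (g : ℂ → ℂ) (hg : DiffContOnCl ℂ g (ball 0 1)) {v : ℂ} (hv : v ∈ ball (0:ℂ) 1) :
    (∮ z in C(0, 1), (z - v)⁻¹ * g z) = 2 * (Real.pi:ℂ) * I * g v := by
  have h := hg.circleIntegral_sub_inv_smul hv
  simpa only [smul_eq_mul, mul_assoc] using h

lemma circ_pole_zero {w : ℂ} (hw : 1 < ‖w‖) :
    (∮ z in C(0, 1), (z - w)⁻¹) = 0 := by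
  have hne : ∀ z ∈ closedBall (0:ℂ) 1, z - w ≠ 0 := by
    intro z hz
    apply sub_ne_of_abs_ne
    have : ‖z‖ ≤ 1 := by
      simpa using mem_closedBall_zero_iff.1 hz
    intro h
    rw [h] at this
    linarith
  apply Complex.circleIntegral_eq_zero_of_differentiable_on_off_countable zero_le_one
    Set.countable_empty
  · exact ((continuous_id.sub continuous_const).continuousOn).inv₀ hne
  · intro z hz
    exact ((differentiableAt_id.sub (differentiableAt_const w)).inv
      (hne z (ball_subset_closedBall hz.1)))

lemma ci_pole (v a : ℂ) (hv : ∀ z ∈ sphere (0:ℂ) 1, z - v ≠ 0) :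
    CircleIntegrable (fun z => a * (z - v)⁻¹) 0 1 :=
  ContinuousOn.circleIntegrable zero_le_one
    (continuousOn_const.mul (((continuous_id.sub continuous_const).continuousOn).inv₀ hv))

lemma ci_pole_g (v a : ℂ) (hv : ∀ z ∈ sphere (0:ℂ) 1, z - v ≠ 0) {g : ℂ → ℂ}
    (hgc : ContinuousOn g (sphere (0:ℂ) 1)) :
    CircleIntegrable (fun z => a * ((z - v)⁻¹ * g z)) 0 1 :=
  ContinuousOn.circleIntegrable zero_le_one
    (continuousOn_const.mul
      ((((continuous_id.sub continuous_const).continuousOn).inv₀ hv).mul hgc))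

lemma sphere_sub_ne {v : ℂ} (hv : ‖v‖ ≠ 1) :
    ∀ z ∈ sphere (0:ℂ) 1, z - v ≠ 0 := by
  intro z hz
  exact sub_ne_of_abs_ne (by rw [sphere_abs hz]; exact fun h => hv h.symm)

/-- elementary exponential integral -/
lemma int_exp_ne (c : ℂ) (hc : c ≠ 0) (hp : Complex.exp (c * ((2*Real.pi : ℝ):ℂ)) = 1) :
    (∫ θ in (0:ℝ)..(2*Real.pi), Complex.exp (c * θ)) = 0 := by
  rw [integral_exp_mul_complex hc, hp]
  norm_num

lemma int_inv_ee : (∫ θ in (0:ℝ)..(2*Real.pi), (ee θ)⁻¹) = 0 := by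
  have h : ∀ θ : ℝ, (ee θ)⁻¹ = Complex.exp ((-I) * θ) := by
    intro θ
    rw [ee, ← Complex.exp_neg]
    congr 1
    ring
  simp only [h]
  apply int_exp_ne _ (by simp [Complex.I_ne_zero])
  rw [show (-I : ℂ) * ((2*Real.pi : ℝ):ℂ) = ((-1 : ℤ):ℂ) * (2*(Real.pi:ℂ)*I) by push_cast; ring]
  exact Complex.exp_int_mul_two_pi_mul_I (-1)

lemma int_inv_ee2 : (∫ θ in (0:ℝ)..(2*Real.pi), ((ee θ)^2)⁻¹) = 0 := by
  have h : ∀ θ : ℝ, ((ee θ)^2)⁻¹ = Complex.exp ((-2*I) * θ) := by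
    intro θ
    rw [ee, ← Complex.exp_nat_mul, ← Complex.exp_neg]
    congr 1
    push_cast
    ring
  simp only [h]
  apply int_exp_ne _ (by simp [Complex.I_ne_zero])
  rw [show (-2*I : ℂ) * ((2*Real.pi : ℝ):ℂ) = ((-2 : ℤ):ℂ) * (2*(Real.pi:ℂ)*I) by push_cast; ring]
  exact Complex.exp_int_mul_two_pi_mul_I (-2)

lemma int_inv_ee2_mul : (∫ θ in (0:ℝ)..(2*Real.pi), ((ee θ)^2)⁻¹ * ee θ) = 0 := by
  have h : ∀ θ : ℝ, ((ee θ)^2)⁻¹ * ee θ = (ee θ)⁻¹ := by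
    intro θ
    have := ee_ne θ
    field_simp
  simp only [h]
  exact int_inv_ee

lemma int_sq : (∫ θ in (0:ℝ)..(2*Real.pi), ((ee θ)^2)⁻¹ * (ee θ)^2) = 2*(Real.pi:ℂ) := by
  have h : ∀ θ : ℝ, ((ee θ)^2)⁻¹ * (ee θ)^2 = 1 :=
    fun θ => inv_mul_cancel₀ (pow_ne_zero 2 (ee_ne θ))
  simp only [h]
  rw [intervalIntegral.integral_const]
  push_cast
  rw [Complex.real_smul]
  push_cast
  ring

section W

variable {w : ℂ}

lemma w_ne (hw : 1 < ‖w‖) : w ≠ 0 := by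
  intro h
  rw [h] at hw
  simp at hw
  linarith

lemma conj_w_ne (hw : 1 < ‖w‖) : (starRingEnd ℂ) w ≠ 0 := by
  intro h
  apply w_ne hw
  have := congrArg (starRingEnd ℂ) h
  simpa using this

lemma sub_w_ne (hw : 1 < ‖w‖) (θ : ℝ) : ee θ - w ≠ 0 :=
  sub_ne_of_abs_ne (by rw [abs_ee]; intro h; rw [← h] at hw; linarith)

lemma hθw_cont (hw : 1 < ‖w‖) : Continuous fun θ => (ee θ - w)⁻¹ :=
  (cont_ee.sub continuous_const).inv₀ (sub_w_ne hw)

lemma int_pole0 (hw : 1 < ‖w‖) :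
    (∫ θ in (0:ℝ)..(2*Real.pi), (ee θ - w)⁻¹) = -(2*(Real.pi:ℂ))/w := by
  rw [int_eq_circ (fun z => (z - w)⁻¹)]
  have hw0 := w_ne hw
  have hEq : Set.EqOn (fun z : ℂ => z⁻¹ * (z - w)⁻¹)
      (fun z : ℂ => w⁻¹ * (z - w)⁻¹ - w⁻¹ * (z - 0)⁻¹) (sphere 0 1) := by
    intro z hz
    have hz0 : z ≠ 0 := sphere_ne_zero hz
    have hzw : z - w ≠ 0 :=
      sub_ne_of_abs_ne (by rw [sphere_abs hz]; intro h; rw [← h] at hw; linarith)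
    simp only [sub_zero]
    field_simp
    ring
  rw [circleIntegral.integral_congr zero_le_one hEq,
    circleIntegral.integral_sub
      (ci_pole w w⁻¹ (sphere_sub_ne (by intro h; rw [h] at hw; linarith)))
      (ci_pole 0 w⁻¹ (fun z hz => by simpa using sphere_ne_zero hz)),
    circleIntegral.integral_const_mul, circleIntegral.integral_const_mul,
    circ_pole_zero hw, circleIntegral.integral_sub_inv_of_mem_ball (mem_ball_self one_pos)]
  rw [mul_zero]
  field_simp
  linear_combination (2*(Real.pi:ℂ)) * Complex.I_mul_I

lemma int_pole1 (hw : 1 < ‖w‖) :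
    (∫ θ in (0:ℝ)..(2*Real.pi), (ee θ)⁻¹ * (ee θ - w)⁻¹) = -(2*(Real.pi:ℂ))/w^2 := by
  have hw0 := w_ne hw
  have h : ∀ θ : ℝ, (ee θ)⁻¹ * (ee θ - w)⁻¹
      = (-w⁻¹) * (ee θ)⁻¹ + w⁻¹ * (ee θ - w)⁻¹ := by
    intro θ
    have h1 := ee_ne θ
    have h2 := sub_w_ne hw θ
    field_simp
    ring
  simp only [h]
  rw [intervalIntegral.integral_add
      (ii (continuous_const.fun_mul (cont_ee.fun_inv₀ ee_ne)))
      (ii (continuous_const.fun_mul (hθw_cont hw))),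
    intervalIntegral.integral_const_mul, intervalIntegral.integral_const_mul,
    int_inv_ee, int_pole0 hw]
  have hpi : ((Real.pi:ℂ)) ≠ 0 := Complex.ofReal_ne_zero.2 Real.pi_ne_zero
  field_simp
  ring

lemma int_pole2 (hw : 1 < ‖w‖) :
    (∫ θ in (0:ℝ)..(2*Real.pi), ((ee θ)^2)⁻¹ * (ee θ - w)⁻¹) = -(2*(Real.pi:ℂ))/w^3 := by
  have hw0 := w_ne hw
  have h : ∀ θ : ℝ, ((ee θ)^2)⁻¹ * (ee θ - w)⁻¹
      = (-w⁻¹) * ((ee θ)^2)⁻¹ + w⁻¹ * ((ee θ)⁻¹ * (ee θ - w)⁻¹) := by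
    intro θ
    have h1 := ee_ne θ
    have h2 := sub_w_ne hw θ
    field_simp
    ring
  simp only [h]
  rw [intervalIntegral.integral_add
      (ii (continuous_const.fun_mul ((cont_ee.fun_pow 2).fun_inv₀ (fun θ => pow_ne_zero 2 (ee_ne θ)))))
      (ii (continuous_const.fun_mul ((cont_ee.fun_inv₀ ee_ne).fun_mul (hθw_cont hw)))),
    intervalIntegral.integral_const_mul, intervalIntegral.integral_const_mul,
    int_inv_ee2, int_pole1 hw]
  have hpi : ((Real.pi:ℂ)) ≠ 0 := Complex.ofReal_ne_zero.2 Real.pi_ne_zero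
  field_simp
  ring

end W

lemma int_cif0 (g : ℂ → ℂ) (hg : DiffContOnCl ℂ g (ball 0 1)) :
    (∫ θ in (0:ℝ)..(2*Real.pi), g (ee θ)) = 2*(Real.pi:ℂ) * g 0 := by
  rw [int_eq_circ g]
  have hEq : Set.EqOn (fun z : ℂ => z⁻¹ * g z) (fun z : ℂ => (z - 0)⁻¹ * g z) (sphere 0 1) := by
    intro z _
    simp
  rw [circleIntegral.integral_congr zero_le_one hEq, cif g hg (mem_ball_self one_pos)]
  exact neg_I_mul (g 0)

lemma int_cifb (g : ℂ → ℂ) (hg : DiffContOnCl ℂ g (ball 0 1)) {b : ℂ}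
    (hb1 : ‖b‖ < 1) (hb0 : b ≠ 0) :
    (∫ θ in (0:ℝ)..(2*Real.pi), (ee θ - b)⁻¹ * g (ee θ))
      = 2*(Real.pi:ℂ) * b⁻¹ * (g b - g 0) := by
  rw [int_eq_circ (fun z => (z - b)⁻¹ * g z)]
  have hgc : ContinuousOn g (sphere (0:ℂ) 1) :=
    hg.continuousOn_ball.mono sphere_subset_closedBall
  have hbs : ∀ z ∈ sphere (0:ℂ) 1, z - b ≠ 0 := sphere_sub_ne (by linarith)
  have hEq : Set.EqOn (fun z : ℂ => z⁻¹ * ((z - b)⁻¹ * g z))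
      (fun z : ℂ => b⁻¹ * ((z - b)⁻¹ * g z) - b⁻¹ * ((z - 0)⁻¹ * g z)) (sphere 0 1) := by
    intro z hz
    have hz0 : z ≠ 0 := sphere_ne_zero hz
    have hzb : z - b ≠ 0 := hbs z hz
    simp only [sub_zero]
    field_simp
    ring
  rw [circleIntegral.integral_congr zero_le_one hEq,
    circleIntegral.integral_sub
      (ci_pole_g b b⁻¹ hbs hgc)
      (ci_pole_g 0 b⁻¹ (fun z hz => by simpa using sphere_ne_zero hz) hgc),
    circleIntegral.integral_const_mul, circleIntegral.integral_const_mul,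
    cif g hg (mem_ball_zero_iff.2 (by simpa using hb1)),
    cif g hg (mem_ball_self one_pos)]
  linear_combination (-(2*(Real.pi:ℂ))*b⁻¹*(g b - g 0)) * Complex.I_mul_I

section Main

variable {w : ℂ}

noncomputable def ccb (w : ℂ) : ℂ := (starRingEnd ℂ) w / w - (w^2)⁻¹
noncomputable def cc (w : ℂ) : ℂ := w / (starRingEnd ℂ) w - (((starRingEnd ℂ) w)^2)⁻¹
noncomputable def uu (w : ℂ) (z : ℂ) : ℂ := z^2 + cc w * z * (z - w)⁻¹
noncomputable def bb (w : ℂ) : ℂ := ((starRingEnd ℂ) w)⁻¹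
noncomputable def VV (w : ℂ) : ℝ := 1 - (Complex.normSq w)⁻¹ + ((Complex.normSq w)^2)⁻¹

lemma abs_bb (hw : 1 < ‖w‖) : ‖bb w‖ < 1 := by
  rw [bb, norm_inv, Complex.norm_conj]
  exact inv_lt_one_of_one_lt₀ hw

lemma bb_ne (hw : 1 < ‖w‖) : bb w ≠ 0 := inv_ne_zero (conj_w_ne hw)

lemma sub_bb_ne (hw : 1 < ‖w‖) (θ : ℝ) : ee θ - bb w ≠ 0 :=
  sub_ne_of_abs_ne (by rw [abs_ee]; have := abs_bb hw; intro h; rw [← h] at this; linarith)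

lemma bb_sub_w_ne (hw : 1 < ‖w‖) : bb w - w ≠ 0 :=
  sub_ne_of_abs_ne (by have := abs_bb hw; intro h; rw [h] at this; linarith)

lemma conj_uu (hw : 1 < ‖w‖) (θ : ℝ) :
    (starRingEnd ℂ) (uu w (ee θ))
      = ((ee θ)^2)⁻¹ - (ccb w * ((starRingEnd ℂ) w)⁻¹) * (ee θ - bb w)⁻¹ := by
  have hz0 := ee_ne θ
  have hcw := conj_w_ne hw
  have hw0 := w_ne hw
  have h1 : (ee θ)⁻¹ - (starRingEnd ℂ) w ≠ 0 := by
    apply sub_ne_of_abs_ne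
    rw [norm_inv, abs_ee, Complex.norm_conj]
    intro h
    rw [← h] at hw
    norm_num at hw
  have h2 : ee θ - bb w ≠ 0 := sub_bb_ne hw θ
  have h4 : (1:ℂ) - ee θ * (starRingEnd ℂ) w ≠ 0 := by
    intro h
    have h5 : ee θ * (starRingEnd ℂ) w = 1 := by linear_combination -h
    have := congrArg (‖·‖) h5
    rw [norm_mul, abs_ee, Complex.norm_conj, one_mul] at this
    simp at this
    linarith
  have h5 : ee θ * (starRingEnd ℂ) w - 1 ≠ 0 := by
    intro h
    exact h4 (by linear_combination -h)
  have hA : ((ee θ)⁻¹ - (starRingEnd ℂ) w)⁻¹ = ee θ * ((1:ℂ) - ee θ * (starRingEnd ℂ) w)⁻¹ := by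
    rw [show (ee θ)⁻¹ - (starRingEnd ℂ) w = (ee θ)⁻¹ * ((1:ℂ) - ee θ * (starRingEnd ℂ) w) by
      field_simp]
    rw [mul_inv, inv_inv]
  have hB : (ee θ - ((starRingEnd ℂ) w)⁻¹)⁻¹
      = (starRingEnd ℂ) w * (ee θ * (starRingEnd ℂ) w - 1)⁻¹ := by
    rw [show ee θ - ((starRingEnd ℂ) w)⁻¹
        = ((starRingEnd ℂ) w)⁻¹ * (ee θ * (starRingEnd ℂ) w - 1) by field_simp]
    rw [mul_inv, inv_inv]
  rw [uu, map_add, map_mul, map_mul, map_pow, map_inv₀, map_sub, conj_ee]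
  rw [show (starRingEnd ℂ) (cc w) = ccb w by
    rw [cc, ccb, map_sub, map_div₀, map_inv₀, map_pow, Complex.conj_conj]]
  rw [ccb, bb] at *
  rw [hA, hB, show ee θ * (starRingEnd ℂ) w - 1 = -(1 - ee θ * (starRingEnd ℂ) w) by ring,
    inv_neg]
  have hz : ee θ * (ee θ)⁻¹ = 1 := mul_inv_cancel₀ hz0
  have hc : (starRingEnd ℂ) w * ((starRingEnd ℂ) w)⁻¹ = 1 := mul_inv_cancel₀ hcw
  linear_combination (((starRingEnd ℂ) w / w - (w^2)⁻¹)
    * (1 - ee θ * (starRingEnd ℂ) w)⁻¹) * (hz - hc)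

lemma cont_uu (hw : 1 < ‖w‖) : Continuous fun θ => uu w (ee θ) := by
  unfold uu
  exact ((cont_ee.pow 2).add ((continuous_const.mul cont_ee).mul (hθw_cont hw)))

lemma Jsplit (hw : 1 < ‖w‖) (g : ℂ → ℂ) (hgc : Continuous fun θ => g (ee θ)) :
    (∫ θ in (0:ℝ)..(2*Real.pi), (starRingEnd ℂ) (uu w (ee θ)) * g (ee θ))
      = (∫ θ in (0:ℝ)..(2*Real.pi), ((ee θ)^2)⁻¹ * g (ee θ))
        - (ccb w * ((starRingEnd ℂ) w)⁻¹)
          * ∫ θ in (0:ℝ)..(2*Real.pi), (ee θ - bb w)⁻¹ * g (ee θ) := by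
  have h : ∀ θ : ℝ, (starRingEnd ℂ) (uu w (ee θ)) * g (ee θ)
      = ((ee θ)^2)⁻¹ * g (ee θ)
        - (ccb w * ((starRingEnd ℂ) w)⁻¹) * ((ee θ - bb w)⁻¹ * g (ee θ)) := by
    intro θ
    rw [conj_uu hw θ]
    ring
  simp only [h]
  rw [intervalIntegral.integral_sub
      (ii (((cont_ee.fun_pow 2).fun_inv₀ (fun θ => pow_ne_zero 2 (ee_ne θ))).fun_mul hgc))
      (ii (continuous_const.fun_mul
        ((((cont_ee.fun_sub continuous_const).fun_inv₀ (sub_bb_ne hw)).fun_mul hgc)))),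
    intervalIntegral.integral_const_mul]

lemma diff_g (hw : 1 < ‖w‖) (A B : ℂ) :
    DiffContOnCl ℂ (fun z => A + B * (z - w)⁻¹) (ball 0 1) := by
  apply DifferentiableOn.diffContOnCl
  rw [closure_ball (0:ℂ) one_ne_zero]
  intro z hz
  have hz1 : ‖z‖ ≤ 1 := by
    simpa using mem_closedBall_zero_iff.1 hz
  have hne : z - w ≠ 0 := sub_ne_of_abs_ne (by intro h; rw [← h] at hw; linarith)
  exact ((differentiableAt_const A).add
    ((differentiableAt_const B).mul
      ((differentiableAt_id.sub (differentiableAt_const w)).inv hne))).differentiableWithinAt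

lemma diff_sq : DiffContOnCl ℂ (fun z : ℂ => z^2) (ball 0 1) := by
  apply DifferentiableOn.diffContOnCl
  exact fun z _ => (differentiableAt_pow 2).differentiableWithinAt

lemma JA (hw : 1 < ‖w‖) (A B : ℂ) :
    (∫ θ in (0:ℝ)..(2*Real.pi),
      (starRingEnd ℂ) (uu w (ee θ)) * (A + B * (ee θ - w)⁻¹)) = 0 := by
  have hw0 := w_ne hw
  have hcw := conj_w_ne hw
  have hb0 := bb_ne hw
  have hbw := bb_sub_w_ne hw
  have hgc : Continuous fun θ => A + B * (ee θ - w)⁻¹ :=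
    continuous_const.add (continuous_const.mul (hθw_cont hw))
  rw [Jsplit hw (fun z => A + B * (z - w)⁻¹) hgc]
  have h1 : ∀ θ : ℝ, ((ee θ)^2)⁻¹ * (A + B * (ee θ - w)⁻¹)
      = A * ((ee θ)^2)⁻¹ + B * (((ee θ)^2)⁻¹ * (ee θ - w)⁻¹) := by
    intro θ; ring
  simp only [h1]
  rw [intervalIntegral.integral_add
      (ii (continuous_const.fun_mul ((cont_ee.fun_pow 2).fun_inv₀ (fun θ => pow_ne_zero 2 (ee_ne θ)))))
      (ii (continuous_const.fun_mul
        (((cont_ee.fun_pow 2).fun_inv₀ (fun θ => pow_ne_zero 2 (ee_ne θ))).fun_mul (hθw_cont hw)))),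
    intervalIntegral.integral_const_mul, intervalIntegral.integral_const_mul,
    int_inv_ee2, int_pole2 hw,
    int_cifb (fun z => A + B * (z - w)⁻¹) (diff_g hw A B) (abs_bb hw) hb0]
  simp only [zero_sub, zero_add, mul_zero]
  have hne1 : (1:ℂ) - w * (starRingEnd ℂ) w ≠ 0 := by
    intro h
    have h5 : w * (starRingEnd ℂ) w = 1 := by linear_combination -h
    have := congrArg (‖·‖) h5
    rw [norm_mul, Complex.norm_conj] at this
    simp at this
    nlinarith
  rw [ccb, bb] at *
  field_simp [hw0, hcw, hne1, hbw]
  have hT : (1 - w * (starRingEnd ℂ) w) * (1 - w * (starRingEnd ℂ) w)⁻¹ = 1 :=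
    mul_inv_cancel₀ hne1
  linear_combination (0:ℂ) * hT

lemma JF (hw : 1 < ‖w‖) :
    (∫ θ in (0:ℝ)..(2*Real.pi), (starRingEnd ℂ) (uu w (ee θ)) * (ee θ)^2)
      = ((2 * Real.pi * VV w : ℝ) : ℂ) := by
  have hw0 := w_ne hw
  have hcw := conj_w_ne hw
  have hb0 := bb_ne hw
  rw [Jsplit hw (fun z => z^2) (cont_ee.pow 2), int_sq,
    int_cifb (fun z => z^2) diff_sq (abs_bb hw) hb0]
  have hcast : ((VV w : ℝ) : ℂ) = 1 - (w * (starRingEnd ℂ) w)⁻¹ + ((w * (starRingEnd ℂ) w)^2)⁻¹ := by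
    rw [VV]
    push_cast
    rw [← Complex.mul_conj]
  push_cast
  rw [hcast, bb, ccb]
  have hne1 : (1:ℂ) - w * (starRingEnd ℂ) w ≠ 0 := by
    intro h
    have h5 : w * (starRingEnd ℂ) w = 1 := by linear_combination -h
    have := congrArg (‖·‖) h5
    rw [norm_mul, Complex.norm_conj] at this
    simp at this
    nlinarith
  field_simp [hw0, hcw]
  ring

lemma JU (hw : 1 < ‖w‖) :
    (∫ θ in (0:ℝ)..(2*Real.pi), (starRingEnd ℂ) (uu w (ee θ)) * uu w (ee θ))
      = ((2 * Real.pi * VV w : ℝ) : ℂ) := by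
  have h : ∀ θ : ℝ, (starRingEnd ℂ) (uu w (ee θ)) * uu w (ee θ)
      = (starRingEnd ℂ) (uu w (ee θ)) * (ee θ)^2
        + (starRingEnd ℂ) (uu w (ee θ)) * (cc w + (cc w * w) * (ee θ - w)⁻¹) := by
    intro θ
    rw [← mul_add]
    congr 1
    rw [uu]
    have h2 := sub_w_ne hw θ
    field_simp
    ring
  simp only [h]
  have hcc : Continuous fun θ => (starRingEnd ℂ) (uu w (ee θ)) :=
    Complex.continuous_conj.comp (cont_uu hw)
  rw [intervalIntegral.integral_add
      (ii (hcc.fun_mul (cont_ee.fun_pow 2)))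
      (ii (hcc.fun_mul (continuous_const.fun_add (continuous_const.fun_mul (hθw_cont hw))))),
    JF hw, JA hw (cc w) (cc w * w), add_zero]

lemma normU (hw : 1 < ‖w‖) :
    (∫ θ in (0:ℝ)..(2*Real.pi), ‖uu w (ee θ)‖ ^ 2) = 2 * Real.pi * VV w := by
  have h1 : ∀ θ : ℝ, ‖uu w (ee θ)‖ ^ 2
      = ((starRingEnd ℂ) (uu w (ee θ)) * uu w (ee θ)).re := by
    intro θ
    rw [Complex.sq_norm, mul_comm, Complex.mul_conj, Complex.ofReal_re]
  simp only [h1]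
  have hcc : Continuous fun θ => (starRingEnd ℂ) (uu w (ee θ)) * uu w (ee θ) :=
    (Complex.continuous_conj.comp (cont_uu hw)).mul (cont_uu hw)
  have h2 := ContinuousLinearMap.intervalIntegral_comp_comm Complex.reCLM (ii hcc)
  simp only [Complex.reCLM_apply] at h2
  rw [h2, JU hw, Complex.ofReal_re]

lemma V_ge (hw : 1 < ‖w‖) : 3/4 ≤ VV w := by
  have h1 : 1 < Complex.normSq w := by
    rw [← Complex.sq_norm]
    nlinarith
  have hx0 : 0 < Complex.normSq w := lt_trans one_pos h1
  rw [VV, ← inv_pow]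
  have htpos : 0 < (Complex.normSq w)⁻¹ := by positivity
  have ht1 : (Complex.normSq w)⁻¹ < 1 := inv_lt_one_of_one_lt₀ h1
  nlinarith [sq_nonneg ((Complex.normSq w)⁻¹ - 1/2)]

/-- Cauchy-Schwarz via the discriminant trick -/
lemma cs {U G : ℝ → ℝ} (hU : Continuous U) (hG : Continuous G) {Aq : ℝ} (hA : 0 < Aq)
    (hAq : (∫ θ in (0:ℝ)..(2*Real.pi), U θ ^ 2) = Aq) :
    (∫ θ in (0:ℝ)..(2*Real.pi), U θ * G θ) ^ 2
      ≤ Aq * ∫ θ in (0:ℝ)..(2*Real.pi), G θ ^ 2 := by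
  set P := ∫ θ in (0:ℝ)..(2*Real.pi), U θ * G θ with hP
  set Bq := ∫ θ in (0:ℝ)..(2*Real.pi), G θ ^ 2 with hB
  have hnn : 0 ≤ ∫ θ in (0:ℝ)..(2*Real.pi), (P/Aq * U θ - G θ)^2 :=
    intervalIntegral.integral_nonneg (by positivity) (fun θ _ => sq_nonneg _)
  have hexp : (∫ θ in (0:ℝ)..(2*Real.pi), (P/Aq * U θ - G θ)^2)
      = P^2/Aq - 2*(P^2/Aq) + Bq := by
    have h : ∀ θ : ℝ, (P/Aq * U θ - G θ)^2
        = ((P/Aq)^2 * U θ^2 - (2*(P/Aq)) * (U θ * G θ)) + G θ^2 := by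
      intro θ; ring
    simp only [h]
    rw [intervalIntegral.integral_add
        (((iiR ((continuous_const.fun_mul (hU.fun_pow 2)).fun_sub
          (continuous_const.fun_mul (hU.fun_mul hG)))))) (iiR (hG.fun_pow 2)),
      intervalIntegral.integral_sub
        (iiR (continuous_const.fun_mul (hU.fun_pow 2))) (iiR (continuous_const.fun_mul (hU.fun_mul hG))),
      intervalIntegral.integral_const_mul, intervalIntegral.integral_const_mul, hAq]
    rw [← hP]
    field_simp
    ring
  rw [hexp] at hnn
  have h5 : P^2/Aq ≤ Bq := by linarith
  calc P^2 = (P^2/Aq) * Aq := (div_mul_cancel₀ _ hA.ne').symm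
  _ ≤ Bq * Aq := mul_le_mul_of_nonneg_right h5 hA.le
  _ = Aq * Bq := mul_comm _ _

lemma sqrt34 : Real.sqrt (3/4) = Real.sqrt 3 / 2 := by
  rw [show (3:ℝ)/4 = (Real.sqrt 3/2)^2 by
    rw [div_pow, Real.sq_sqrt (by norm_num : (0:ℝ) ≤ 3)]; norm_num,
    Real.sqrt_sq (by positivity)]

lemma lower_core (hw : 1 < ‖w‖) (A B : ℂ) (s : ℂ → ℂ)
    (hs : ∀ θ : ℝ, s (ee θ) = A + B * (ee θ - w)⁻¹) :
    Real.sqrt 3 / 2 ≤ L2Norm (fun z => z ^ 2 - s z) := by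
  set U : ℝ → ℝ := fun θ => ‖uu w (ee θ)‖ with hU
  set G : ℝ → ℝ := fun θ => ‖(ee θ)^2 - (A + B * (ee θ - w)⁻¹)‖ with hG
  have hUc : Continuous U := continuous_norm.comp (cont_uu hw)
  have hGc : Continuous G := continuous_norm.comp
    ((cont_ee.pow 2).sub (continuous_const.add (continuous_const.mul (hθw_cont hw))))
  have hApos : 0 < 2 * Real.pi * VV w := by
    have := V_ge hw
    nlinarith [Real.pi_pos]
  have hJ : (∫ θ in (0:ℝ)..(2*Real.pi),
      (starRingEnd ℂ) (uu w (ee θ)) * ((ee θ)^2 - s (ee θ)))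
        = ((2 * Real.pi * VV w : ℝ) : ℂ) := by
    have h : ∀ θ : ℝ, (starRingEnd ℂ) (uu w (ee θ)) * ((ee θ)^2 - s (ee θ))
        = (starRingEnd ℂ) (uu w (ee θ)) * (ee θ)^2
          - (starRingEnd ℂ) (uu w (ee θ)) * (A + B * (ee θ - w)⁻¹) := by
      intro θ
      rw [hs θ]
      ring
    simp only [h]
    have hcc : Continuous fun θ => (starRingEnd ℂ) (uu w (ee θ)) :=
      Complex.continuous_conj.comp (cont_uu hw)
    rw [intervalIntegral.integral_sub
        (ii (hcc.fun_mul (cont_ee.fun_pow 2)))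
        (ii (hcc.fun_mul (continuous_const.fun_add (continuous_const.fun_mul (hθw_cont hw))))),
      JF hw, JA hw A B, sub_zero]
  have hP : 2 * Real.pi * VV w ≤ ∫ θ in (0:ℝ)..(2*Real.pi), U θ * G θ := by
    have h1 : ‖∫ θ in (0:ℝ)..(2*Real.pi),
        (starRingEnd ℂ) (uu w (ee θ)) * ((ee θ)^2 - s (ee θ))‖
          ≤ ∫ θ in (0:ℝ)..(2*Real.pi),
            ‖(starRingEnd ℂ) (uu w (ee θ)) * ((ee θ)^2 - s (ee θ))‖ :=
      intervalIntegral.norm_integral_le_integral_norm Real.two_pi_pos.le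
    rw [hJ] at h1
    have h2 : ‖((2 * Real.pi * VV w : ℝ) : ℂ)‖ = 2 * Real.pi * VV w := by
      rw [Complex.norm_real, Real.norm_eq_abs, abs_of_pos hApos]
    rw [h2] at h1
    have h3 : ∀ θ : ℝ, ‖(starRingEnd ℂ) (uu w (ee θ)) * ((ee θ)^2 - s (ee θ))‖
        = U θ * G θ := by
      intro θ
      rw [norm_mul, Complex.norm_conj, hs θ]
    calc 2 * Real.pi * VV w ≤ _ := h1
    _ = ∫ θ in (0:ℝ)..(2*Real.pi), U θ * G θ := by
        apply intervalIntegral.integral_congr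
        intro θ _
        exact h3 θ
  have hA2 : (∫ θ in (0:ℝ)..(2*Real.pi), U θ ^ 2) = 2 * Real.pi * VV w := normU hw
  have hCS := cs hUc hGc hApos hA2
  have hB : 2 * Real.pi * VV w ≤ ∫ θ in (0:ℝ)..(2*Real.pi), G θ ^ 2 := by
    nlinarith [hP, hCS, hApos]
  have hint : (∫ θ in (0:ℝ)..(2*Real.pi),
      ‖(fun z => z ^ 2 - s z) (Complex.exp (θ * Complex.I))‖ ^ 2)
        = ∫ θ in (0:ℝ)..(2*Real.pi), G θ ^ 2 := by
    apply intervalIntegral.integral_congr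
    intro θ _
    show ‖(ee θ)^2 - s (ee θ)‖ ^ 2 = G θ ^ 2
    rw [hs θ]
  rw [L2Norm, hint]
  have h6 : VV w ≤ (2 * Real.pi)⁻¹ * ∫ θ in (0:ℝ)..(2*Real.pi), G θ ^ 2 := by
    calc VV w = (2 * Real.pi)⁻¹ * (2 * Real.pi * VV w) := by
          field_simp
    _ ≤ (2 * Real.pi)⁻¹ * ∫ θ in (0:ℝ)..(2*Real.pi), G θ ^ 2 :=
          mul_le_mul_of_nonneg_left hB (by positivity)
  calc Real.sqrt 3 / 2 = Real.sqrt (3/4) := sqrt34.symm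
  _ ≤ Real.sqrt ((2 * Real.pi)⁻¹ * ∫ θ in (0:ℝ)..(2*Real.pi), G θ ^ 2) := by
      apply Real.sqrt_le_sqrt
      have := V_ge hw
      linarith

lemma lower_lin (A B : ℂ) (s : ℂ → ℂ)
    (hs : ∀ θ : ℝ, s (ee θ) = A + B * ee θ) :
    Real.sqrt 3 / 2 ≤ L2Norm (fun z => z ^ 2 - s z) := by
  set U : ℝ → ℝ := fun _ => (1:ℝ) with hU
  set G : ℝ → ℝ := fun θ => ‖(ee θ)^2 - (A + B * ee θ)‖ with hG
  have hGc : Continuous G := continuous_norm.comp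
    ((cont_ee.pow 2).sub (continuous_const.add (continuous_const.mul cont_ee)))
  have hJ : (∫ θ in (0:ℝ)..(2*Real.pi),
      ((starRingEnd ℂ) ((ee θ)^2)) * ((ee θ)^2 - s (ee θ)))
        = ((2 * Real.pi : ℝ) : ℂ) := by
    have h : ∀ θ : ℝ, ((starRingEnd ℂ) ((ee θ)^2)) * ((ee θ)^2 - s (ee θ))
        = ((ee θ)^2)⁻¹ * (ee θ)^2 - (A * ((ee θ)^2)⁻¹ + B * (((ee θ)^2)⁻¹ * ee θ)) := by
      intro θ
      rw [hs θ, map_pow, conj_ee, inv_pow]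
      ring
    simp only [h]
    have hi2 : Continuous fun θ => ((ee θ)^2)⁻¹ :=
      (cont_ee.pow 2).inv₀ (fun θ => pow_ne_zero 2 (ee_ne θ))
    rw [intervalIntegral.integral_sub
        (ii (hi2.fun_mul (cont_ee.fun_pow 2)))
        (ii ((continuous_const.fun_mul hi2).fun_add (continuous_const.fun_mul (hi2.fun_mul cont_ee)))),
      intervalIntegral.integral_add
        (ii (continuous_const.fun_mul hi2)) (ii (continuous_const.fun_mul (hi2.fun_mul cont_ee))),
      intervalIntegral.integral_const_mul, intervalIntegral.integral_const_mul,
      int_sq, int_inv_ee2, int_inv_ee2_mul]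
    push_cast
    ring
  have hApos : (0:ℝ) < 2 * Real.pi := Real.two_pi_pos
  have hP : 2 * Real.pi ≤ ∫ θ in (0:ℝ)..(2*Real.pi), U θ * G θ := by
    have h1 : ‖∫ θ in (0:ℝ)..(2*Real.pi),
        ((starRingEnd ℂ) ((ee θ)^2)) * ((ee θ)^2 - s (ee θ))‖
          ≤ ∫ θ in (0:ℝ)..(2*Real.pi),
            ‖((starRingEnd ℂ) ((ee θ)^2)) * ((ee θ)^2 - s (ee θ))‖ :=
      intervalIntegral.norm_integral_le_integral_norm Real.two_pi_pos.le
    rw [hJ] at h1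
    have h2 : ‖((2 * Real.pi : ℝ) : ℂ)‖ = 2 * Real.pi := by
      rw [Complex.norm_real, Real.norm_eq_abs, abs_of_pos hApos]
    rw [h2] at h1
    have h3 : ∀ θ : ℝ, ‖((starRingEnd ℂ) ((ee θ)^2)) * ((ee θ)^2 - s (ee θ))‖
        = U θ * G θ := by
      intro θ
      rw [norm_mul, Complex.norm_conj, hs θ,
        norm_pow, abs_ee]
      simp [hU, hG]
    calc 2 * Real.pi ≤ _ := h1
    _ = ∫ θ in (0:ℝ)..(2*Real.pi), U θ * G θ := by
        apply intervalIntegral.integral_congr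
        intro θ _
        exact h3 θ
  have hA2 : (∫ θ in (0:ℝ)..(2*Real.pi), U θ ^ 2) = 2 * Real.pi := by
    simp [hU]
  have hUc : Continuous U := continuous_const
  have hCS := cs hUc hGc hApos hA2
  have hB : 2 * Real.pi ≤ ∫ θ in (0:ℝ)..(2*Real.pi), G θ ^ 2 := by
    nlinarith [hP, hCS, hApos]
  have hint : (∫ θ in (0:ℝ)..(2*Real.pi),
      ‖(fun z => z ^ 2 - s z) (Complex.exp (θ * Complex.I))‖ ^ 2)
        = ∫ θ in (0:ℝ)..(2*Real.pi), G θ ^ 2 := by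
    apply intervalIntegral.integral_congr
    intro θ _
    show ‖(ee θ)^2 - s (ee θ)‖ ^ 2 = G θ ^ 2
    rw [hs θ]
  rw [L2Norm, hint]
  have h6 : (1:ℝ) ≤ (2 * Real.pi)⁻¹ * ∫ θ in (0:ℝ)..(2*Real.pi), G θ ^ 2 := by
    calc (1:ℝ) = (2 * Real.pi)⁻¹ * (2 * Real.pi) := by
          field_simp
    _ ≤ (2 * Real.pi)⁻¹ * ∫ θ in (0:ℝ)..(2*Real.pi), G θ ^ 2 :=
          mul_le_mul_of_nonneg_left hB (by positivity)
  calc Real.sqrt 3 / 2 = Real.sqrt (3/4) := sqrt34.symm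
  _ ≤ Real.sqrt ((2 * Real.pi)⁻¹ * ∫ θ in (0:ℝ)..(2*Real.pi), G θ ^ 2) := by
      apply Real.sqrt_le_sqrt
      linarith

lemma one_lt_sqrt2 : (1:ℝ) < Real.sqrt 2 := by
  nlinarith [Real.sq_sqrt (by norm_num : (0:ℝ) ≤ 2), Real.sqrt_nonneg 2]

lemma isRat (θ : ℝ) (rf : ℂ → ℂ)
    (hrf : ∀ z : ℂ, rf z = (z * Complex.exp (θ * Complex.I) / 2) /
        (z * Complex.exp (-(θ : ℂ) * Complex.I) - (Real.sqrt 2 : ℂ) * Complex.I)) :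
    IsRatDeg 1 rf := by
  refine ⟨Polynomial.C (Complex.exp (θ * Complex.I) / 2) * Polynomial.X,
    Polynomial.C (Complex.exp (-(θ:ℂ) * Complex.I)) * Polynomial.X
      + Polynomial.C (-((Real.sqrt 2 : ℂ) * Complex.I)), ?_, ?_, ?_, ?_⟩
  · exact le_trans (Polynomial.natDegree_C_mul_le _ _) (le_of_eq Polynomial.natDegree_X)
  · exact Polynomial.natDegree_linear_le
  · intro z hz
    simp only [Polynomial.eval_add, Polynomial.eval_mul, Polynomial.eval_C, Polynomial.eval_X]
    intro h0
    have h1 : Complex.exp (-(θ:ℂ) * Complex.I) * z = (Real.sqrt 2 : ℂ) * Complex.I := by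
      linear_combination h0
    have h2 := congrArg (‖·‖) h1
    rw [norm_mul, norm_mul, Complex.norm_I, Complex.norm_real,
      Real.norm_of_nonneg (Real.sqrt_nonneg 2),
      show (-(θ:ℂ) * Complex.I) = ((-θ : ℝ):ℂ) * Complex.I by push_cast; ring,
      Complex.norm_exp_ofReal_mul_I, one_mul, mul_one] at h2
    have := one_lt_sqrt2
    rw [h2] at hz
    linarith
  · intro z hz
    rw [hrf z]
    simp only [Polynomial.eval_add, Polynomial.eval_mul, Polynomial.eval_C, Polynomial.eval_X]
    ring

lemma exact_value (θ₀ : ℝ) (rf : ℂ → ℂ)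
    (hrf : ∀ z : ℂ, rf z = (z * Complex.exp (θ₀ * Complex.I) / 2) /
        (z * Complex.exp (-(θ₀ : ℂ) * Complex.I) - (Real.sqrt 2 : ℂ) * Complex.I)) :
    L2Norm (fun z => z ^ 2 - rf z) = Real.sqrt 3 / 2 := by
  set w : ℂ := (Real.sqrt 2 : ℂ) * Complex.I * ee θ₀ with hwdef
  have habs : ‖w‖ = Real.sqrt 2 := by
    rw [hwdef, norm_mul, norm_mul, Complex.norm_I, abs_ee, Complex.norm_real,
      Real.norm_of_nonneg (Real.sqrt_nonneg 2)]
    ring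
  have hw : 1 < ‖w‖ := by rw [habs]; exact one_lt_sqrt2
  have hw0 := w_ne hw
  have hns : Complex.normSq w = 2 := by
    rw [← Complex.sq_norm, habs, Real.sq_sqrt (by norm_num : (0:ℝ) ≤ 2)]
  have h2 : (starRingEnd ℂ) w * w = 2 := by
    rw [mul_comm, Complex.mul_conj, hns]
    norm_num
  have hcw : (starRingEnd ℂ) w = 2 / w := by
    rw [eq_div_iff hw0]
    exact h2
  have hcc : cc w = w^2 / 4 := by
    rw [cc, hcw]
    field_simp
    ring
  have hsq : ((Real.sqrt 2:ℝ) : ℂ)^2 = 2 := by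
    rw [← Complex.ofReal_pow, Real.sq_sqrt (by norm_num : (0:ℝ) ≤ 2)]
    norm_num
  have he : (ee θ₀)^2 = -w^2/2 := by
    rw [hwdef]
    linear_combination ((ee θ₀)^2 * Complex.I^2/2) * hsq + ((ee θ₀)^2 : ℂ) * Complex.I_sq
  have hVV : VV w = 3/4 := by rw [VV, hns]; norm_num
  have hpt : ∀ θ : ℝ, (ee θ)^2 - rf (ee θ) = uu w (ee θ) := by
    intro θ
    have hzw := sub_w_ne hw θ
    have he0 := ee_ne θ₀
    rw [hrf (ee θ), uu, hcc,
      show Complex.exp (θ₀ * Complex.I) = ee θ₀ from rfl, exp_neg_eq θ₀]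
    have hden2 : ee θ * (ee θ₀)⁻¹ - (Real.sqrt 2:ℂ) * Complex.I
        = (ee θ₀)⁻¹ * (ee θ - w) := by
      rw [hwdef]
      field_simp
    rw [hden2]
    have h9 : (ee θ * ee θ₀ / 2) / ((ee θ₀)⁻¹ * (ee θ - w))
        = (ee θ * (ee θ₀)^2 / 2) * (ee θ - w)⁻¹ := by
      rw [div_eq_iff (mul_ne_zero (inv_ne_zero he0) hzw), div_mul_eq_mul_div,
        div_mul_eq_mul_div, div_eq_iff (by norm_num : (2:ℂ) ≠ 0)]
      field_simp
    rw [h9, he]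
    ring
  rw [L2Norm]
  have hint : (∫ θ in (0:ℝ)..(2*Real.pi),
      ‖(fun z => z ^ 2 - rf z) (Complex.exp (θ * Complex.I))‖ ^ 2)
        = 2 * Real.pi * VV w := by
    rw [← normU hw]
    apply intervalIntegral.integral_congr
    intro θ _
    show ‖(ee θ)^2 - rf (ee θ)‖ ^ 2 = ‖uu w (ee θ)‖ ^ 2
    rw [hpt θ]
  rw [hint, hVV]
  rw [show (2 * Real.pi)⁻¹ * (2 * Real.pi * (3/4)) = 3/4 by
    field_simp]
  rw [show (3:ℝ)/4 = (Real.sqrt 3/2)^2 by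
    rw [div_pow, Real.sq_sqrt (by norm_num : (0:ℝ) ≤ 3)]; norm_num,
    Real.sqrt_sq (by positivity)]

lemma eval_deg_one (p : Polynomial ℂ) (hp : p.natDegree ≤ 1) (z : ℂ) :
    p.eval z = p.coeff 0 + p.coeff 1 * z := by
  rw [Polynomial.eval_eq_sum_range' (lt_of_le_of_lt hp one_lt_two)]
  rw [show (2:ℕ) = 0+1+1 by norm_num, Finset.sum_range_succ, Finset.sum_range_succ,
    Finset.sum_range_zero]
  ring

lemma lower_any (s : ℂ → ℂ) (hs : IsRatDeg 1 s) :
    Real.sqrt 3 / 2 ≤ L2Norm (fun z => z ^ 2 - s z) := by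
  obtain ⟨p, q, hp, hq, hq0, hpq⟩ := hs
  by_cases hq1 : q.coeff 1 = 0
  · have hq00 : q.coeff 0 ≠ 0 := by
      have h := hq0 0 (by simp)
      rw [eval_deg_one q hq 0] at h
      simpa [hq1] using h
    apply lower_lin (p.coeff 0 / q.coeff 0) (p.coeff 1 / q.coeff 0) s
    intro θ
    rw [hpq (ee θ) (le_of_eq (abs_ee θ)), eval_deg_one p hp, eval_deg_one q hq, hq1]
    field_simp
    simp [hq00]
  · set wq : ℂ := -(q.coeff 0 / q.coeff 1) with hwq
    have hrel : q.coeff 0 = -(q.coeff 1 * wq) := by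
      rw [hwq]
      field_simp
    have hw : 1 < ‖wq‖ := by
      by_contra hcon
      push_neg at hcon
      apply hq0 wq hcon
      rw [eval_deg_one q hq, hrel]
      ring
    apply lower_core hw (p.coeff 1 / q.coeff 1)
      ((p.coeff 0 + p.coeff 1 * wq) / q.coeff 1) s
    intro θ
    have hzw := sub_w_ne hw θ
    have hqz : q.coeff 0 + q.coeff 1 * ee θ ≠ 0 := by
      have h := hq0 (ee θ) (le_of_eq (abs_ee θ))
      rwa [eval_deg_one q hq] at h
    rw [hrel] at hqz
    rw [hpq (ee θ) (le_of_eq (abs_ee θ)), eval_deg_one p hp, eval_deg_one q hq, hrel]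
    rw [show -(q.coeff 1 * wq) + q.coeff 1 * ee θ = q.coeff 1 * (ee θ - wq) by ring]
    field_simp
    ring

end Main

end Stmt10Aux

/-- For `f(z) = z²`, each `r_θ(z) = (z e^{iθ}/2)/(z e^{-iθ} - √2 i)` is a best degree-1 L²
approximation, with error `√3/2`; in particular the best approximation is nonunique. -/
theorem stmt10 (r : ℝ → ℂ → ℂ)
    (hr : ∀ (θ : ℝ) (z : ℂ), r θ z =
      (z * Complex.exp (θ * Complex.I) / 2) /
        (z * Complex.exp (-(θ : ℂ) * Complex.I) - (Real.sqrt 2 : ℂ) * Complex.I)) :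
    (∀ θ : ℝ, IsRatDeg 1 (r θ)) ∧
    (∀ θ : ℝ, L2Norm (fun z => z ^ 2 - r θ z) = Real.sqrt 3 / 2) ∧
    (∀ s : ℂ → ℂ, IsRatDeg 1 s → Real.sqrt 3 / 2 ≤ L2Norm (fun z => z ^ 2 - s z)) ∧
    sInf {y : ℝ | ∃ s : ℂ → ℂ, IsRatDeg 1 s ∧ y = L2Norm (fun z => z ^ 2 - s z)} =
      Real.sqrt 3 / 2 ∧
    (∃ (θ₁ θ₂ : ℝ) (z : ℂ), ‖z‖ ≤ 1 ∧ r θ₁ z ≠ r θ₂ z) := by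
  have part1 : ∀ θ : ℝ, IsRatDeg 1 (r θ) := fun θ => Stmt10Aux.isRat θ (r θ) (hr θ)
  have part2 : ∀ θ : ℝ, L2Norm (fun z => z ^ 2 - r θ z) = Real.sqrt 3 / 2 :=
    fun θ => Stmt10Aux.exact_value θ (r θ) (hr θ)
  have part3 : ∀ s : ℂ → ℂ, IsRatDeg 1 s → Real.sqrt 3 / 2 ≤ L2Norm (fun z => z ^ 2 - s z) :=
    fun s hs => Stmt10Aux.lower_any s hs
  refine ⟨part1, part2, part3, ?_, ?_⟩
  · have hle : IsLeast {y : ℝ | ∃ s : ℂ → ℂ, IsRatDeg 1 s ∧ y = L2Norm (fun z => z ^ 2 - s z)}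
        (Real.sqrt 3 / 2) := by
      constructor
      · exact ⟨r 0, part1 0, (part2 0).symm⟩
      · rintro y ⟨s, hs1, rfl⟩
        exact part3 s hs1
    exact hle.csInf_eq
  · refine ⟨0, Real.pi, 1, by norm_num, ?_⟩
    rw [hr, hr]
    have e0 : Complex.exp (((0:ℝ):ℂ) * Complex.I) = 1 := by
      norm_num
    have e0' : Complex.exp (-((0:ℝ):ℂ) * Complex.I) = 1 := by
      norm_num
    have eπ : Complex.exp (((Real.pi:ℝ):ℂ) * Complex.I) = -1 := Complex.exp_pi_mul_I
    have eπ' : Complex.exp (-((Real.pi:ℝ):ℂ) * Complex.I) = -1 := by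
      rw [show -((Real.pi:ℝ):ℂ) * Complex.I = -(((Real.pi:ℝ):ℂ) * Complex.I) by ring,
        Complex.exp_neg, Complex.exp_pi_mul_I]
      norm_num
    rw [e0, e0', eπ, eπ']
    have hs2 := Stmt10Aux.one_lt_sqrt2
    have d1 : (1:ℂ) * 1 - (Real.sqrt 2:ℂ) * Complex.I ≠ 0 := by
      intro hh
      have := congrArg Complex.re hh
      simp at this
    have d2 : (1:ℂ) * -1 - (Real.sqrt 2:ℂ) * Complex.I ≠ 0 := by
      intro hh
      have := congrArg Complex.re hh
      simp at this
    intro h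
    rw [div_eq_div_iff d1 d2] at h
    have h2 := congrArg Complex.im h
    simp at h2
    linarith
end

section
/- Let t_1, …, t_{n+1} be distinct complex numbers, let f_1, …, f_{n+1} be complex values, and let w_1, …, w_{n+1} be nonzero complex weights. Let r be the rational function given in barycentric form by r(z) = (Σ_{i=1}^{n+1} w_i f_i/(z − t_i)) / (Σ_{i=1}^{n+1} w_i/(z − t_i)) for z ∉ {t_1, …, t_{n+1}}, extended by r(t_i) = f_i. Then for each k, r is analytic in a neighborhood of t_k and its derivative there satisfies 0 = w_k r′(t_k) + Σ_{i≠k} w_i (f_k − f_i)/(t_k − t_i); equivalently, r′(t_k) = −(1/w_k) Σ_{i≠k} w_i (f_k − f_i)/(t_k − t_i). -/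
open Complex Finset

/-- Schneider–Werner formula: the derivative at a support point `t_k` of a rational
function in barycentric form satisfies
`0 = w_k r'(t_k) + Σ_{i≠k} w_i (f_k − f_i)/(t_k − t_i)`. -/
theorem stmt11 (n : ℕ) (t f : Fin (n + 1) → ℂ) (ht : Function.Injective t)
    (w : Fin (n + 1) → ℂ) (hw : ∀ i, w i ≠ 0)
    (r : ℂ → ℂ)
    (hr1 : ∀ z : ℂ, (∀ i, z ≠ t i) →
      r z = (∑ i, w i * f i / (z - t i)) / (∑ i, w i / (z - t i)))
    (hr2 : ∀ i, r (t i) = f i) :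
    ∀ k : Fin (n + 1),
      AnalyticAt ℂ r (t k) ∧
      w k * deriv r (t k) + ∑ i ∈ Finset.univ.erase k, w i * (f k - f i) / (t k - t i) = 0 ∧
      deriv r (t k) =
        -(w k)⁻¹ * ∑ i ∈ Finset.univ.erase k, w i * (f k - f i) / (t k - t i) := by
  intro k
  set S := Finset.univ.erase k with hS
  have htk : ∀ i ∈ S, t k - t i ≠ 0 := by
    intro i hi
    have hik : i ≠ k := (Finset.mem_erase.mp hi).1
    exact sub_ne_zero.mpr fun h => hik (ht h.symm)
  -- auxiliary analytic functions
  set h₁ : ℂ → ℂ := fun z => ∑ i ∈ S, w i * f i / (z - t i) with hh₁def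
  set h₂ : ℂ → ℂ := fun z => ∑ i ∈ S, w i / (z - t i) with hh₂def
  have hh₁ : AnalyticAt ℂ h₁ (t k) := by
    apply Finset.analyticAt_fun_sum
    intro i hi
    exact analyticAt_const.div (analyticAt_id.sub analyticAt_const) (htk i hi)
  have hh₂ : AnalyticAt ℂ h₂ (t k) := by
    apply Finset.analyticAt_fun_sum
    intro i hi
    exact analyticAt_const.div (analyticAt_id.sub analyticAt_const) (htk i hi)
  set P : ℂ → ℂ := fun z => w k * f k + (z - t k) * h₁ z with hPdef
  set Q : ℂ → ℂ := fun z => w k + (z - t k) * h₂ z with hQdef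
  have hP : AnalyticAt ℂ P (t k) :=
    analyticAt_const.add ((analyticAt_id.sub analyticAt_const).mul hh₁)
  have hQ : AnalyticAt ℂ Q (t k) :=
    analyticAt_const.add ((analyticAt_id.sub analyticAt_const).mul hh₂)
  have hQ0 : Q (t k) ≠ 0 := by simp [hQdef, hw k]
  have hg : AnalyticAt ℂ (fun z => P z / Q z) (t k) := hP.div hQ hQ0
  -- r agrees with P/Q near t k
  have heq : r =ᶠ[nhds (t k)] fun z => P z / Q z := by
    have hopen : IsOpen {z : ℂ | ∀ i ∈ S, z ≠ t i} := by
      have : {z : ℂ | ∀ i ∈ S, z ≠ t i} = ⋂ i ∈ S, {t i}ᶜ := by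
        ext z; simp [Set.mem_iInter]
      rw [this]
      exact Set.Finite.isOpen_biInter (Set.toFinite _) fun i _ => isOpen_compl_singleton
    have hmem : t k ∈ {z : ℂ | ∀ i ∈ S, z ≠ t i} := by
      intro i hi
      exact fun h => (htk i hi) (by rw [h]; ring)
    filter_upwards [hopen.mem_nhds hmem] with z hz
    by_cases hzk : z = t k
    · subst hzk
      simp only [hPdef, hQdef, sub_self, zero_mul, add_zero, hr2 k]
      exact (mul_div_cancel_left₀ (f k) (hw k)).symm
    · have hz' : ∀ i, z ≠ t i := by
        intro i
        by_cases hik : i = k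
        · rw [hik]; exact hzk
        · exact hz i (Finset.mem_erase.mpr ⟨hik, Finset.mem_univ i⟩)
      have hc : z - t k ≠ 0 := sub_ne_zero.mpr hzk
      rw [hr1 z hz']
      rw [← Finset.add_sum_erase _ _ (Finset.mem_univ k),
        ← Finset.add_sum_erase _ (fun i => w i / (z - t i)) (Finset.mem_univ k)]
      have e1 : w k * f k / (z - t k) + h₁ z = P z / (z - t k) := by
        rw [eq_div_iff hc, hPdef]
        field_simp
      have e2 : w k / (z - t k) + h₂ z = Q z / (z - t k) := by
        rw [eq_div_iff hc, hQdef]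
        field_simp
      rw [show (∑ i ∈ Finset.univ.erase k, w i * f i / (z - t i)) = h₁ z from rfl,
        show (∑ i ∈ Finset.univ.erase k, w i / (z - t i)) = h₂ z from rfl, e1, e2,
        div_div_div_cancel_right₀ hc]
  have hra : AnalyticAt ℂ r (t k) := hg.congr heq.symm
  -- derivatives
  have hdh₁ : DifferentiableAt ℂ h₁ (t k) := hh₁.differentiableAt
  have hdh₂ : DifferentiableAt ℂ h₂ (t k) := hh₂.differentiableAt
  have hdsub : DifferentiableAt ℂ (fun z : ℂ => z - t k) (t k) :=
    differentiableAt_id.sub (differentiableAt_const _)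
  have hderivP : deriv P (t k) = h₁ (t k) := by
    rw [hPdef]
    rw [deriv_const_add]
    rw [deriv_fun_mul hdsub hdh₁]
    simp [deriv_fun_sub (differentiableAt_id (𝕜 := ℂ) (x := t k)) (differentiableAt_const _)]
  have hderivQ : deriv Q (t k) = h₂ (t k) := by
    rw [hQdef]
    rw [deriv_const_add]
    rw [deriv_fun_mul hdsub hdh₂]
    simp [deriv_fun_sub (differentiableAt_id (𝕜 := ℂ) (x := t k)) (differentiableAt_const _)]
  have hPtk : P (t k) = w k * f k := by simp [hPdef]
  have hQtk : Q (t k) = w k := by simp [hQdef]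
  have hderivr : deriv r (t k) = (h₁ (t k) * w k - w k * f k * h₂ (t k)) / (w k) ^ 2 := by
    rw [heq.deriv_eq]
    rw [deriv_fun_div hP.differentiableAt hQ.differentiableAt hQ0]
    rw [hderivP, hderivQ, hPtk, hQtk]
  -- rewrite the sum
  have hsum : ∑ i ∈ S, w i * (f k - f i) / (t k - t i)
      = f k * h₂ (t k) - h₁ (t k) := by
    rw [hh₁def, hh₂def]
    simp only
    rw [Finset.mul_sum, ← Finset.sum_sub_distrib]
    apply Finset.sum_congr rfl
    intro i hi
    field_simp
  have key : w k * deriv r (t k) + ∑ i ∈ S, w i * (f k - f i) / (t k - t i) = 0 := by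
    rw [hderivr, hsum]
    field_simp [hw k]
    ring
  refine ⟨hra, key, ?_⟩
  rw [hderivr, hsum]
  field_simp [hw k]
  ring
end

section
/- Let t_1, …, t_{n+1} be distinct complex numbers, let f_1, …, f_{n+1} be complex values, and let d_1, …, d_n be prescribed derivative values. Define the rectangular Hermite Loewner matrix L̂ ∈ ℂ^{n×(n+1)} by L̂_{kj} = (f_k − f_j)/(t_k − t_j) for j ≠ k and L̂_{kk} = d_k (for k = 1, …, n, j = 1, …, n+1). Suppose w = (w_1, …, w_{n+1}) lies in the null space of L̂ and all entries w_i are nonzero. Then the rational function r given in barycentric form by r(z) = (Σ_{i=1}^{n+1} w_i f_i/(z − t_i)) / (Σ_{i=1}^{n+1} w_i/(z − t_i)), extended by r(t_i) = f_i, satisfies the Lagrange conditions r(t_i) = f_i for i = 1, …, n+1 and the Hermite conditions r′(t_k) = d_k for k = 1, …, n. -/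
open Complex Finset Matrix

/-- If the barycentric weight vector `w` (with nonzero entries) lies in the null space of
the rectangular Hermite Loewner matrix `L̂`, then the barycentric rational function with
those weights satisfies the Lagrange conditions `r(t_i) = f_i` and the Hermite conditions
`r'(t_k) = d_k`. -/
theorem stmt12 (n : ℕ) (t fv : Fin (n + 1) → ℂ) (ht : Function.Injective t)
    (d : Fin n → ℂ)
    (Lhat : Matrix (Fin n) (Fin (n + 1)) ℂ)
    (hLhat : ∀ (k : Fin n) (j : Fin (n + 1)),
      Lhat k j = if j = Fin.castSucc k then d k
        else (fv (Fin.castSucc k) - fv j) / (t (Fin.castSucc k) - t j))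
    (w : Fin (n + 1) → ℂ) (hw0 : ∀ i, w i ≠ 0)
    (hw : Lhat.mulVec w = 0)
    (r : ℂ → ℂ)
    (hr1 : ∀ z : ℂ, (∀ i, z ≠ t i) →
      r z = (∑ i, w i * fv i / (z - t i)) / (∑ i, w i / (z - t i)))
    (hr2 : ∀ i, r (t i) = fv i) :
    (∀ i : Fin (n + 1), r (t i) = fv i) ∧
    ∀ k : Fin n, AnalyticAt ℂ r (t (Fin.castSucc k)) ∧
      deriv r (t (Fin.castSucc k)) = d k := by
  refine ⟨hr2, fun k => ?_⟩
  set k' : Fin (n + 1) := Fin.castSucc k with hk'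
  set a : ℂ := t k' with ha
  set s : Finset (Fin (n + 1)) := Finset.univ.erase k' with hs
  have hne : ∀ i ∈ s, a - t i ≠ 0 := by
    intro i hi
    have : i ≠ k' := (Finset.mem_erase.mp hi).1
    exact sub_ne_zero.mpr fun h => this (ht h.symm)
  set h : ℂ → ℂ := fun z => ∑ i ∈ s, w i * fv i / (z - t i) with hh_def
  set p : ℂ → ℂ := fun z => ∑ i ∈ s, w i / (z - t i) with hp_def
  set F : ℂ → ℂ := fun z => w k' * fv k' + (z - a) * h z with hF_def
  set G : ℂ → ℂ := fun z => w k' + (z - a) * p z with hG_def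
  have hha : AnalyticAt ℂ h a := by
    apply Finset.analyticAt_fun_sum
    intro i hi
    exact analyticAt_const.div ((analyticAt_id.sub analyticAt_const)) (hne i hi)
  have hpa : AnalyticAt ℂ p a := by
    apply Finset.analyticAt_fun_sum
    intro i hi
    exact analyticAt_const.div ((analyticAt_id.sub analyticAt_const)) (hne i hi)
  have hFa : AnalyticAt ℂ F a :=
    analyticAt_const.add (((analyticAt_id.sub analyticAt_const)).mul hha)
  have hGa : AnalyticAt ℂ G a :=
    analyticAt_const.add (((analyticAt_id.sub analyticAt_const)).mul hpa)
  have hFa0 : F a = w k' * fv k' := by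
    show w k' * fv k' + (a - a) * h a = w k' * fv k'
    simp
  have hGa' : G a = w k' := by
    show w k' + (a - a) * p a = w k'
    simp
  have hGa0 : G a ≠ 0 := by rw [hGa']; exact hw0 k'
  set g : ℂ → ℂ := fun z => F z / G z with hg_def
  have hga : AnalyticAt ℂ g a := hFa.div hGa hGa0
  have hga_val : g a = fv k' := by
    show F a / G a = fv k'
    rw [hFa0, hGa']
    exact mul_div_cancel_left₀ _ (hw0 k')
  -- eventual equality of r and g near a
  have hev : ∀ᶠ z in nhds a, ∀ i ∈ s, z ≠ t i := by
    rw [Filter.eventually_all_finset]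
    intro i hi
    exact eventually_ne_nhds (sub_ne_zero.mp (hne i hi))
  have heq : r =ᶠ[nhds a] g := by
    filter_upwards [hev] with z hz
    rcases eq_or_ne z a with hza | hza
    · rw [hza, hga_val, ha]
      exact hr2 k'
    · have hzt : ∀ i, z ≠ t i := by
        intro i
        rcases eq_or_ne i k' with rfl | hik
        · rw [← ha]; exact hza
        · exact hz i (Finset.mem_erase.mpr ⟨hik, Finset.mem_univ i⟩)
      have hza' : z - a ≠ 0 := sub_ne_zero.mpr hza
      have hNsplit : (∑ i, w i * fv i / (z - t i))
          = w k' * fv k' / (z - a) + h z := by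
        rw [hh_def, ha, ← Finset.add_sum_erase _ _ (Finset.mem_univ k')]
      have hDsplit : (∑ i, w i / (z - t i)) = w k' / (z - a) + p z := by
        rw [hp_def, ha, ← Finset.add_sum_erase _ _ (Finset.mem_univ k')]
      have hFz : F z = (z - a) * (∑ i, w i * fv i / (z - t i)) := by
        rw [hNsplit]
        show w k' * fv k' + (z - a) * h z = (z - a) * (w k' * fv k' / (z - a) + h z)
        field_simp
      have hGz : G z = (z - a) * (∑ i, w i / (z - t i)) := by
        rw [hDsplit]
        show w k' + (z - a) * p z = (z - a) * (w k' / (z - a) + p z)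
        field_simp
      rw [hr1 z hzt]
      show _ = F z / G z
      rw [hFz, hGz, mul_div_mul_left _ _ hza']
  constructor
  · exact hga.congr heq.symm
  · have hF' : HasDerivAt F (h a) a := by
      have h1 : HasDerivAt (fun z : ℂ => (z - a) * h z)
          (1 * h a + (a - a) * deriv h a) a :=
        ((hasDerivAt_id a).sub_const a).mul (hha.differentiableAt.hasDerivAt)
      have h2 := (hasDerivAt_const a (w k' * fv k')).add h1
      exact h2.congr_deriv (by simp)
    have hG' : HasDerivAt G (p a) a := by
      have h1 : HasDerivAt (fun z : ℂ => (z - a) * p z)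
          (1 * p a + (a - a) * deriv p a) a :=
        ((hasDerivAt_id a).sub_const a).mul (hpa.differentiableAt.hasDerivAt)
      have h2 := (hasDerivAt_const a (w k')).add h1
      exact h2.congr_deriv (by simp)
    have hg' : HasDerivAt g ((h a * G a - F a * p a) / G a ^ 2) a := hF'.div hG' hGa0
    have hderiv : deriv r a = (h a * G a - F a * p a) / G a ^ 2 := by
      rw [heq.deriv_eq]
      exact hg'.deriv
    rw [hderiv, hFa0, hGa']
    -- use the null space condition
    have hnull : ∑ j, Lhat k j * w j = 0 := congrFun hw k
    rw [← Finset.add_sum_erase _ (fun j => Lhat k j * w j) (Finset.mem_univ k')] at hnull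
    have hLkk : Lhat k k' = d k := by rw [hLhat]; simp [hk']
    have hLkj : ∀ j ∈ s, Lhat k j = (fv k' - fv j) / (a - t j) := by
      intro j hj
      rw [hLhat, if_neg (Finset.mem_erase.mp hj).1, ← hk', ← ha]
    rw [hLkk, Finset.sum_congr rfl (fun j hj => by rw [hLkj j hj])] at hnull
    have key : ∑ j ∈ s, (fv k' - fv j) / (a - t j) * w j = -(d k * w k') := by
      linear_combination hnull
    have hhp : h a - fv k' * p a = d k * w k' := by
      have step : h a - fv k' * p a
          = -∑ j ∈ s, ((fv k' - fv j) / (a - t j) * w j) := by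
        show (∑ i ∈ s, w i * fv i / (a - t i)) - fv k' * ∑ i ∈ s, w i / (a - t i)
          = -∑ j ∈ s, ((fv k' - fv j) / (a - t j) * w j)
        rw [Finset.mul_sum, ← Finset.sum_sub_distrib, ← Finset.sum_neg_distrib]
        refine Finset.sum_congr rfl fun j hj => ?_
        have hj0 := hne j hj
        field_simp
        ring
      rw [step, key, neg_neg]
    have hwk := hw0 k'
    field_simp
    linear_combination hhp
end

section
/- Let σ_1, …, σ_n be distinct complex numbers and let f_1, …, f_n and f_1′, …, f_n′ be complex values (samples of a function and its derivative). Define the Hermite Loewner matrix L ∈ ℂ^{n×n} by L_{ij} = (f_i − f_j)/(σ_i − σ_j) for i ≠ j and L_{ii} = f_i′, the shifted Hermite Loewner matrix M ∈ ℂ^{n×n} by M_{ij} = (σ_i f_i − σ_j f_j)/(σ_i − σ_j) for i ≠ j and M_{ii} = f_i + σ_i f_i′, and the vector Y = (f_1, …, f_n)ᵀ. For z ∈ ℂ such that M − zL is invertible, define H(z) = Yᵀ (M − zL)^{−1} Y. If M − σ_k L is invertible, then H is analytic in a neighborhood of σ_k and satisfies the Hermite interpolation conditions H(σ_k) = f_k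 and H′(σ_k) = f_k′. -/
open Complex Matrix

attribute [local instance] Matrix.linftyOpNormedRing Matrix.linftyOpNormedAlgebra

section Aux
variable {n : ℕ}

instance stmt15CompleteSpace : CompleteSpace (Matrix (Fin n) (Fin n) ℂ) :=
  (by infer_instance : CompleteSpace (Fin n → Fin n → ℂ))

noncomputable def stmt15phi (fv : Fin n → ℂ) : Matrix (Fin n) (Fin n) ℂ →L[ℂ] ℂ :=
  LinearMap.toContinuousLinearMap
  { toFun := fun X => dotProduct fv (X.mulVec fv)
    map_add' := by intro X Y; simp [Matrix.add_mulVec, dotProduct_add]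
    map_smul' := by intro c X; simp [Matrix.smul_mulVec, dotProduct_smul] }

lemma stmt15_hasDerivAt (σ : Fin n → ℂ)
    (fv : Fin n → ℂ) (L M : Matrix (Fin n) (Fin n) ℂ)
    (H : ℂ → ℂ)
    (hH : ∀ z : ℂ, H z = dotProduct fv ((M - z • L)⁻¹.mulVec fv))
    (z : ℂ) (hz : IsUnit (M - z • L)) :
    HasDerivAt H (stmt15phi fv ((M - z • L)⁻¹ * L * (M - z • L)⁻¹)) z := by
  set A : ℂ → Matrix (Fin n) (Fin n) ℂ := fun w => M - w • L with hA
  have hAder : HasDerivAt A (-L) z := by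
    have h1 : HasDerivAt (fun w : ℂ => w • L) ((1:ℂ) • L) z :=
      (hasDerivAt_id z).smul_const L
    have h2 := (hasDerivAt_const z M).sub h1
    simp only [one_smul, zero_sub] at h2
    exact h2
  have hinv : HasDerivAt (fun w => Ring.inverse (A w))
      ((-(ContinuousLinearMap.mulLeftRight ℂ _ ↑hz.unit⁻¹ ↑hz.unit⁻¹)) (-L)) z := by
    have := (hasFDerivAt_ringInverse (𝕜 := ℂ) hz.unit)
    rw [hz.unit_spec] at this
    exact this.comp_hasDerivAt z hAder
  have hval : ((-(ContinuousLinearMap.mulLeftRight ℂ _ ↑hz.unit⁻¹ ↑hz.unit⁻¹)) (-L))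
      = (M - z • L)⁻¹ * L * (M - z • L)⁻¹ := by
    have hcoe : (↑hz.unit⁻¹ : Matrix (Fin n) (Fin n) ℂ) = (M - z • L)⁻¹ := by
      rw [Matrix.coe_units_inv, hz.unit_spec]
    simp [ContinuousLinearMap.mulLeftRight_apply, hcoe, mul_assoc]
  rw [hval] at hinv
  have hcomp := ((stmt15phi fv).hasFDerivAt.comp_hasDerivAt z hinv)
  have hHe : H = fun w => stmt15phi fv (Ring.inverse (A w)) := by
    funext w
    rw [hH w, ← Matrix.nonsing_inv_eq_ringInverse]
    rfl
  rw [hHe]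
  exact hcomp

end Aux

/-- Hermite Loewner interpolation: the transfer function
`H(z) = Yᵀ (M − z L)⁻¹ Y` built from the Hermite Loewner pencil interpolates the data
`H(σ_k) = f_k`, `H'(σ_k) = f_k'` at every point `σ_k` where the pencil is invertible. -/
theorem stmt15 (n : ℕ) (σ : Fin n → ℂ) (hσ : Function.Injective σ)
    (fv fd : Fin n → ℂ)
    (L M : Matrix (Fin n) (Fin n) ℂ)
    (hL : ∀ i j, L i j = if i = j then fd i else (fv i - fv j) / (σ i - σ j))
    (hM : ∀ i j, M i j =
      if i = j then fv i + σ i * fd i else (σ i * fv i - σ j * fv j) / (σ i - σ j))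
    (H : ℂ → ℂ)
    (hH : ∀ z : ℂ, H z = dotProduct fv ((M - z • L)⁻¹.mulVec fv))
    (k : Fin n) (hk : IsUnit (M - σ k • L)) :
    AnalyticAt ℂ H (σ k) ∧ H (σ k) = fv k ∧ deriv H (σ k) = fd k := by
  set A : Matrix (Fin n) (Fin n) ℂ := M - σ k • L with hAdef
  have hdet : IsUnit A.det := (Matrix.isUnit_iff_isUnit_det A).mp hk
  -- column k of A is fv
  have hcol : A.mulVec (Pi.single k 1) = fv := by
    funext i
    rw [Matrix.mulVec_single]
    show A i k * 1 = fv i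
    rw [mul_one]
    by_cases hik : i = k
    · subst hik
      simp [hAdef, Matrix.sub_apply, hM i i, hL i i]
    · have hne : σ i - σ k ≠ 0 := sub_ne_zero.mpr (fun h => hik (hσ h))
      simp only [hAdef, Matrix.sub_apply, Matrix.smul_apply, smul_eq_mul, hM i k, hL i k,
        if_neg hik]
      field_simp
      ring
  -- row k of A is fv
  have hrow : Matrix.vecMul (Pi.single k 1) A = fv := by
    funext j
    rw [Matrix.single_vecMul]
    show 1 * A k j = fv j
    rw [one_mul]
    by_cases hkj : k = j
    · subst hkj
      simp [hAdef, Matrix.sub_apply, hM k k, hL k k]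
    · have hne : σ k - σ j ≠ 0 := sub_ne_zero.mpr (fun h => hkj (hσ h))
      simp only [hAdef, Matrix.sub_apply, Matrix.smul_apply, smul_eq_mul, hM k j, hL k j,
        if_neg hkj]
      field_simp
      ring
  have hinvcol : A⁻¹.mulVec fv = Pi.single k 1 := by
    rw [← hcol, Matrix.mulVec_mulVec, Matrix.nonsing_inv_mul A hdet, Matrix.one_mulVec]
  have hinvrow : Matrix.vecMul fv A⁻¹ = Pi.single k 1 := by
    rw [← hrow, Matrix.vecMul_vecMul, Matrix.mul_nonsing_inv A hdet, Matrix.vecMul_one]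
  have hval : H (σ k) = fv k := by
    rw [hH, ← hAdef, hinvcol, dotProduct_single, mul_one]
  have hLkk : L k k = fd k := by rw [hL k k, if_pos rfl]
  -- derivative value
  have hdval : stmt15phi fv (A⁻¹ * L * A⁻¹) = fd k := by
    show dotProduct fv ((A⁻¹ * L * A⁻¹).mulVec fv) = fd k
    rw [← Matrix.mulVec_mulVec, ← Matrix.mulVec_mulVec, hinvcol,
      Matrix.dotProduct_mulVec, hinvrow, single_dotProduct, one_mul,
      Matrix.mulVec_single]
    show L k k * 1 = fd k
    rw [mul_one, hLkk]
  have hder : HasDerivAt H (fd k) (σ k) := by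
    have := stmt15_hasDerivAt σ fv L M H hH (σ k) hk
    rwa [← hAdef, hdval] at this
  -- analyticity
  have hAcont : Continuous fun z : ℂ => M - z • L := continuous_const.sub (continuous_id.smul continuous_const)
  have hUopen : IsOpen {z : ℂ | IsUnit (M - z • L)} :=
    Units.isOpen.preimage hAcont
  have hmem : {z : ℂ | IsUnit (M - z • L)} ∈ nhds (σ k) :=
    hUopen.mem_nhds hk
  have hdiff : DifferentiableOn ℂ H {z : ℂ | IsUnit (M - z • L)} := by
    intro z hz
    exact (stmt15_hasDerivAt σ fv L M H hH z hz).differentiableAt.differentiableWithinAt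
  exact ⟨hdiff.analyticAt hmem, hval, hder.deriv⟩
end
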